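/- arXiv:2111.02723 — 10 statements merged into one kernel-verified Lean document; each statement's English description precedes it below -/
import Mathlib

section
/- If G is an HVG on [N] with non-nested vertices i_1 < i_2 < ... < i_k, then for indices j, m the edge i_j i_m belongs to E(G) if and only if |j - m| = 1; i.e., consecutive non-nested vertices are adjacent and no two non-consecutive non-nested vertices are adjacent. -/
/-- The horizontal visibility graph of a data sequence `D : Fin N → ℝ`:
vertices `i ≠ j` are adjacent iff every entry strictly between them is
smaller than both `D i` and `D j`. -/
def HVG {N : ℕ} (D : Fin N → ℝ) : SimpleGraph (Fin N) where
  Adj i j := i ≠ j ∧ ∀ k : Fin N, min i j < k → k < max i j → D k < D i ∧ D k < D j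
  symm := by
    constructor
    intro i j h
    refine ⟨h.1.symm, fun k hk1 hk2 => ?_⟩
    rw [min_comm j i] at hk1
    rw [max_comm j i] at hk2
    exact (h.2 k hk1 hk2).symm
  loopless := by constructor; intro i h; exact h.1 rfl

/-- The set of HVGs on `N` vertices (arbitrary non-negative data sequences). -/
def HVGs (N : ℕ) : Set (SimpleGraph (Fin N)) :=
  {G | ∃ D : Fin N → ℝ, (∀ i, 0 ≤ D i) ∧ HVG D = G}

/-- The set of HVGs on `N` vertices realizable by data sequences with pairwise
distinct entries. -/
def HVGsDistinct (N : ℕ) : Set (SimpleGraph (Fin N)) :=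
  {G | ∃ D : Fin N → ℝ, Function.Injective D ∧ HVG D = G}

/-- A vertex `i` is non-nested in `G` if there is no edge `uv` with `u < i < v`. -/
def Nonnested {N : ℕ} (G : SimpleGraph (Fin N)) (i : Fin N) : Prop :=
  ¬ ∃ u v : Fin N, u < i ∧ i < v ∧ G.Adj u v

/-!
An edge `i_j i_m` with a non-nested vertex strictly between its ends would nest that vertex,
so only consecutive non-nested vertices can be adjacent. Conversely, for consecutive `i_j < i_m`
every vertex strictly between them is nested; a highest such vertex `x` lies under some edge
`uv`, whose ends are higher than `x` and hence lie outside `(i_j, i_m)`. As `i_j` and `i_m` are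
themselves non-nested, `uv` is the edge `i_j i_m`.
-/

section Nonnested

variable {N : ℕ} {G : SimpleGraph (Fin N)}

lemma Nonnested.not_adj {u v w : Fin N} (hw : Nonnested G w) (huw : u < w) (hwv : w < v) :
    ¬ G.Adj u v :=
  fun h => hw ⟨u, v, huw, hwv, h⟩

lemma succ_eq_of_adj_of_nonnested {k : ℕ} {e : Fin k → Fin N} (hmono : StrictMono e)
    (he : ∀ i, Nonnested G (e i)) {j m : Fin k} (hjm : j < m) (h : G.Adj (e j) (e m)) :
    j.val + 1 = m.val := by
  by_contra hne
  have hjm' : j.val < m.val := hjm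
  let i : Fin k := ⟨j.val + 1, by omega⟩
  have hji : j < i := Fin.lt_def.mpr (Nat.lt_succ_self _)
  have him : i < m := Fin.lt_def.mpr (show j.val + 1 < m.val by omega)
  exact (he i).not_adj (hmono hji) (hmono him) h

end Nonnested

namespace HVG

variable {N : ℕ} {D : Fin N → ℝ} {u v : Fin N}

lemma lt_of_adj {k : Fin N} (h : (HVG D).Adj u v) (huk : u < k) (hkv : k < v) :
    D k < D u ∧ D k < D v :=
  h.2 k ((min_le_left u v).trans_lt huk) (hkv.trans_le (le_max_right u v))

lemma adj_of_forall_lt (huv : u < v) (h : ∀ k, u < k → k < v → D k < D u ∧ D k < D v) :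
    (HVG D).Adj u v :=
  ⟨huv.ne, fun k hk₁ hk₂ =>
    h k (by rwa [min_eq_left huv.le] at hk₁) (by rwa [max_eq_right huv.le] at hk₂)⟩

lemma le_and_le_of_adj_of_forall_le {a b x : Fin N} (hx : x ∈ Finset.Ioo a b)
    (hmax : ∀ y ∈ Finset.Ioo a b, D y ≤ D x) (h : (HVG D).Adj u v) (hux : u < x) (hxv : x < v) :
    u ≤ a ∧ b ≤ v := by
  rw [Finset.mem_Ioo] at hx
  refine ⟨le_of_not_gt fun hau => ?_, le_of_not_gt fun hvb => ?_⟩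
  · exact (hmax u (Finset.mem_Ioo.mpr ⟨hau, hux.trans hx.2⟩)).not_gt (lt_of_adj h hux hxv).1
  · exact (hmax v (Finset.mem_Ioo.mpr ⟨hx.1.trans hxv, hvb⟩)).not_gt (lt_of_adj h hux hxv).2

lemma adj_of_nonnested_of_forall_not_nonnested {a b : Fin N} (hab : a < b)
    (ha : Nonnested (HVG D) a) (hb : Nonnested (HVG D) b)
    (hbetween : ∀ x, a < x → x < b → ¬ Nonnested (HVG D) x) : (HVG D).Adj a b := by
  by_cases hne : (Finset.Ioo a b).Nonempty
  · obtain ⟨x, hx, hmax⟩ := (Finset.Ioo a b).exists_max_image D hne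
    have hx' := Finset.mem_Ioo.mp hx
    obtain ⟨u, v, hux, hxv, huv⟩ := not_not.mp (hbetween x hx'.1 hx'.2)
    obtain ⟨hua, hbv⟩ := le_and_le_of_adj_of_forall_le hx hmax huv hux hxv
    obtain rfl : u = a := hua.eq_of_not_lt fun hua => ha.not_adj hua (hx'.1.trans hxv) huv
    obtain rfl : v = b := (hbv.eq_of_not_lt fun hbv => hb.not_adj (hux.trans hx'.2) hbv huv).symm
    exact huv
  · exact adj_of_forall_lt hab fun k hk₁ hk₂ => absurd ⟨k, Finset.mem_Ioo.mpr ⟨hk₁, hk₂⟩⟩ hne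

end HVG

/-- if `e` enumerates the non-nested vertices of an HVG in
increasing order, then `e j` and `e m` are adjacent iff `|j - m| = 1`. -/
theorem hvg_nonnested_adjacency (N k : ℕ) (D : Fin N → ℝ) (e : Fin k → Fin N)
    (hmono : StrictMono e)
    (hrange : ∀ v : Fin N, v ∈ Set.range e ↔ Nonnested (HVG D) v)
    (j m : Fin k) :
    (HVG D).Adj (e j) (e m) ↔ (j.val + 1 = m.val ∨ m.val + 1 = j.val) := by
  have hnn : ∀ i, Nonnested (HVG D) (e i) := fun i => (hrange _).mp ⟨i, rfl⟩
  have hconsec : ∀ a b : Fin k, a.val + 1 = b.val → (HVG D).Adj (e a) (e b) := by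
    intro a b hab
    refine HVG.adj_of_nonnested_of_forall_not_nonnested (hmono (Fin.lt_def.mpr (by omega)))
      (hnn a) (hnn b) fun x hax hxb hx => ?_
    obtain ⟨i, rfl⟩ := (hrange x).mpr hx
    have hai : a.val < i.val := hmono.lt_iff_lt.mp hax
    have hib : i.val < b.val := hmono.lt_iff_lt.mp hxb
    omega
  constructor
  · intro hadj
    rcases lt_or_gt_of_ne fun h => hadj.ne (congrArg e h) with h | h
    · exact Or.inl (succ_eq_of_adj_of_nonnested hmono hnn h hadj)
    · exact Or.inr (succ_eq_of_adj_of_nonnested hmono hnn h hadj.symm)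
  · rintro (h | h)
    · exact hconsec j m h
    · exact (hconsec m j h).symm
end

section
/- Removing any edge other than a consecutive edge i(i+1) from an HVG yields an HVG: if G ∈ 𝒢_N and e ∈ E(G) with e not of the form i(i+1), then G \ e ∈ 𝒢_N. -/
/-!
Let `uv` be an edge with `u + 1 < v`, so every entry strictly between `u` and `v` lies below
`c = min (D u) (D v)`, and let `M` be the largest of these entries. Raising every interior entry
equal to `M` up to `c` blocks the visibility between `u` and `v`. No other edge disappears: an
edge jumping over a raised point has both endpoints above `M`, hence outside `(u, v)`, so it also
jumps over `u` or `v`, which sit at height at least `c`. No edge appears: entries only increase,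
so a new edge would have to end at a raised point, which sees nothing beyond `u` and `v` and,
inside `(u, v)`, only entries below `M`, which it already saw.
-/

section RaiseLevel

variable {N : ℕ} {D : Fin N → ℝ} {u v m i j k : Fin N}

noncomputable def raiseLevel (D : Fin N → ℝ) (u v m : Fin N) : Fin N → ℝ :=
  fun k => if k ∈ Set.Ioo u v ∧ D k = D m then min (D u) (D v) else D k

lemma raiseLevel_of_raised (hk : k ∈ Set.Ioo u v) (hkm : D k = D m) :
    raiseLevel D u v m k = min (D u) (D v) :=
  if_pos ⟨hk, hkm⟩

lemma raiseLevel_of_not_raised (hk : ¬ (k ∈ Set.Ioo u v ∧ D k = D m)) :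
    raiseLevel D u v m k = D k :=
  if_neg hk

lemma raiseLevel_of_notMem (hk : k ∉ Set.Ioo u v) : raiseLevel D u v m k = D k :=
  raiseLevel_of_not_raised fun h => hk h.1

lemma raiseLevel_left : raiseLevel D u v m u = D u :=
  raiseLevel_of_notMem fun h => lt_irrefl u h.1

lemma raiseLevel_right : raiseLevel D u v m v = D v :=
  raiseLevel_of_notMem fun h => lt_irrefl v h.2

lemma HVG.lt_of_adj_of_mem_Ioo (hadj : (HVG D).Adj u v) (huv : u < v) (hk : k ∈ Set.Ioo u v) :
    D k < D u ∧ D k < D v :=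
  hadj.2 k (by rw [min_eq_left huv.le]; exact hk.1) (by rw [max_eq_right huv.le]; exact hk.2)

lemma le_raiseLevel (hadj : (HVG D).Adj u v) (huv : u < v) : D k ≤ raiseLevel D u v m k := by
  by_cases hk : k ∈ Set.Ioo u v ∧ D k = D m
  · rw [raiseLevel_of_raised hk.1 hk.2]
    exact le_min (HVG.lt_of_adj_of_mem_Ioo hadj huv hk.1).1.le
      (HVG.lt_of_adj_of_mem_Ioo hadj huv hk.1).2.le
  · rw [raiseLevel_of_not_raised hk]

lemma not_adj_raiseLevel (hm : m ∈ Set.Ioo u v) : ¬ (HVG (raiseLevel D u v m)).Adj u v := by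
  intro h
  have hblock := h.2 m (min_le_left u v |>.trans_lt hm.1) (hm.2.trans_le (le_max_right u v))
  rw [raiseLevel_of_raised hm rfl, raiseLevel_left, raiseLevel_right] at hblock
  exact lt_irrefl _ (lt_min hblock.1 hblock.2)

lemma lt_of_adj_raiseLevel (hadj : (HVG D).Adj u v) (huv : u < v)
    (hmax : ∀ k ∈ Set.Ioo u v, D k ≤ D m) (h : (HVG (raiseLevel D u v m)).Adj i j)
    (hk₁ : min i j < k) (hk₂ : k < max i j) : D k < D i := by
  have hki := (h.2 k hk₁ hk₂).1
  by_cases hi : i ∈ Set.Ioo u v ∧ D i = D m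
  · rw [raiseLevel_of_raised hi.1 hi.2] at hki
    have hunseen : ∀ w, min (D u) (D v) ≤ D w → ¬ (min i j < w ∧ w < max i j) := by
      intro w hw hbetween
      have hwi := (h.2 w hbetween.1 hbetween.2).1
      rw [raiseLevel_of_raised hi.1 hi.2] at hwi
      by_cases hw' : w ∈ Set.Ioo u v ∧ D w = D m
      · rw [raiseLevel_of_raised hw'.1 hw'.2] at hwi
        exact lt_irrefl _ hwi
      · rw [raiseLevel_of_not_raised hw'] at hwi
        exact not_lt.2 hw hwi
    have hku : ¬ (min i j < u ∧ u < max i j) := hunseen u (min_le_left _ _)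
    have hkv : ¬ (min i j < v ∧ v < max i j) := hunseen v (min_le_right _ _)
    have hk : k ∈ Set.Ioo u v := by
      obtain ⟨hui, hiv⟩ := hi.1
      constructor <;> grind
    have hkm : D k ≠ D m := by
      intro hkm
      rw [raiseLevel_of_raised hk hkm] at hki
      exact lt_irrefl _ hki
    exact hi.2 ▸ lt_of_le_of_ne (hmax k hk) hkm
  · rw [raiseLevel_of_not_raised hi] at hki
    exact (le_raiseLevel hadj huv).trans_lt hki

lemma raiseLevel_lt_of_adj (hadj : (HVG D).Adj u v) (huv : u < v)
    (hmax : ∀ k ∈ Set.Ioo u v, D k ≤ D m) (h : (HVG D).Adj i j) (hne : s(i, j) ≠ s(u, v))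
    (hk₁ : min i j < k) (hk₂ : k < max i j) : raiseLevel D u v m k < raiseLevel D u v m i := by
  obtain ⟨hki, hkj⟩ := h.2 k hk₁ hk₂
  by_cases hk : k ∈ Set.Ioo u v ∧ D k = D m
  · rw [raiseLevel_of_raised hk.1 hk.2]
    have houtside : ∀ w, D k < D w → w ∉ Set.Ioo u v := fun w hw hw' =>
      not_le.2 hw (hk.2 ▸ hmax w hw')
    rw [raiseLevel_of_notMem (houtside i hki)]
    have hendpoint : (min i j < u ∧ u < max i j) ∨ (min i j < v ∧ v < max i j) := by
      have hi := houtside i hki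
      have hj := houtside j hkj
      rw [Ne, Sym2.eq_iff] at hne
      obtain ⟨huk, hkv⟩ := hk.1
      simp only [Set.mem_Ioo, not_and, not_lt] at hi hj
      grind
    rcases hendpoint with hu | hv
    · exact (min_le_left _ _).trans_lt (h.2 u hu.1 hu.2).1
    · exact (min_le_right _ _).trans_lt (h.2 v hv.1 hv.2).1
  · rw [raiseLevel_of_not_raised hk]
    exact hki.trans_le (le_raiseLevel hadj huv)

theorem HVG_raiseLevel (hadj : (HVG D).Adj u v) (huv : u < v) (hm : m ∈ Set.Ioo u v)
    (hmax : ∀ k ∈ Set.Ioo u v, D k ≤ D m) :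
    HVG (raiseLevel D u v m) = (HVG D).deleteEdges {s(u, v)} := by
  ext i j
  rw [SimpleGraph.deleteEdges_adj, Set.mem_singleton_iff]
  constructor
  · intro h
    refine ⟨⟨h.1, fun k hk₁ hk₂ => ⟨lt_of_adj_raiseLevel hadj huv hmax h hk₁ hk₂, ?_⟩⟩, ?_⟩
    · rw [min_comm] at hk₁
      rw [max_comm] at hk₂
      exact lt_of_adj_raiseLevel hadj huv hmax h.symm hk₁ hk₂
    · intro hij
      rw [Sym2.eq_iff] at hij
      rcases hij with ⟨rfl, rfl⟩ | ⟨rfl, rfl⟩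
      · exact not_adj_raiseLevel hm h
      · exact not_adj_raiseLevel hm h.symm
  · rintro ⟨h, hne⟩
    refine ⟨h.1, fun k hk₁ hk₂ => ⟨raiseLevel_lt_of_adj hadj huv hmax h hne hk₁ hk₂, ?_⟩⟩
    rw [min_comm] at hk₁
    rw [max_comm] at hk₂
    rw [Sym2.eq_swap] at hne
    exact raiseLevel_lt_of_adj hadj huv hmax h.symm hne hk₁ hk₂

end RaiseLevel

lemma deleteEdges_mem_HVGs_of_val_add_one_lt {N : ℕ} {D : Fin N → ℝ} (hD : ∀ i, 0 ≤ D i)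
    {u v : Fin N} (hadj : (HVG D).Adj u v) (huv : u.val + 1 < v.val) :
    (HVG D).deleteEdges {s(u, v)} ∈ HVGs N := by
  have hlt : u < v := Fin.lt_def.mpr (by omega)
  have hne : (Finset.Ioo u v).Nonempty :=
    ⟨⟨u.val + 1, by omega⟩, Finset.mem_Ioo.mpr ⟨Fin.lt_def.mpr (by simp), Fin.lt_def.mpr huv⟩⟩
  obtain ⟨m, hm, hmax⟩ := Finset.exists_max_image _ D hne
  simp only [Finset.mem_Ioo] at hm hmax
  exact ⟨raiseLevel D u v m, fun k => (hD k).trans (le_raiseLevel hadj hlt),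
    HVG_raiseLevel hadj hlt hm hmax⟩

/-- deleting a non-consecutive edge from an HVG yields an HVG. -/
theorem hvg_delete_edge (N : ℕ) (G : SimpleGraph (Fin N)) (hG : G ∈ HVGs N)
    (u v : Fin N) (he : G.Adj u v)
    (hne : v.val ≠ u.val + 1 ∧ u.val ≠ v.val + 1) :
    G.deleteEdges {s(u, v)} ∈ HVGs N := by
  obtain ⟨D, hD, rfl⟩ := hG
  rcases he.ne.lt_or_gt with huv | hvu
  · exact deleteEdges_mem_HVGs_of_val_add_one_lt hD he (by rw [Fin.lt_def] at huv; omega)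
  · rw [Sym2.eq_swap]
    exact deleteEdges_mem_HVGs_of_val_add_one_lt hD he.symm (by rw [Fin.lt_def] at hvu; omega)
end

section
/- Adding an edge between two non-nested vertices of an HVG yields an HVG: if G ∈ 𝒢_N and j, l are non-nested vertices of G with jl ∉ E(G), then G ∪ {jl} ∈ 𝒢_N. -/
/-!
A non-nested vertex `c` of `HVG x` is a cut: no visibility passes over it, so visibility on a
window `[a, b]` containing `c` is determined by visibility on `[a, c]` and on `[c, b]`.

Every sequence can be replaced on a window `[a, b]`, without changing visibility there, by a
normal form whose endpoints both take the value `0` and whose interior values are `≤ 0`. If `a`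
and `b` see each other, truncate at `min (x a) (x b)`; otherwise an interior maximum is a cut,
and normal forms of the two halves glue. Gluing normal forms of the three windows cut out by
`j < l`, and then raising the values at `j` and `l` to `1`, makes `j` and `l` see each other and
changes no other visibility; composing with `exp` makes the data positive.
-/

namespace HorizontalVisibility

section Visibility

variable {ι : Type*} [LinearOrder ι] {x y : ι → ℝ} {a b c i j : ι}

def Visible (x : ι → ℝ) (i j : ι) : Prop :=
  i < j ∧ ∀ k ∈ Set.Ioo i j, x k < min (x i) (x j)

theorem visible_congr (h : ∀ k ∈ Set.Icc i j, x k = y k) : Visible x i j ↔ Visible y i j := by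
  refine and_congr_right fun hij => ?_
  rw [h i (Set.left_mem_Icc.2 hij.le), h j (Set.right_mem_Icc.2 hij.le)]
  exact forall₂_congr fun k hk => by rw [h k (Set.Ioo_subset_Icc_self hk)]

theorem visible_comp_strictMono {f : ℝ → ℝ} (hf : StrictMono f) :
    Visible (f ∘ x) i j ↔ Visible x i j := by
  simp only [Visible, Function.comp, ← hf.monotone.map_min, hf.lt_iff_lt]

theorem visible_min_const_iff {m : ℝ} (h : min (x i) (x j) ≤ m) :
    Visible (fun k => min (x k) m) i j ↔ Visible x i j := by
  have hmin : min (min (x i) m) (min (x j) m) = min (x i) (x j) := by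
    rw [min_min_min_comm, min_self, min_eq_left h]
  simp only [Visible, hmin, min_lt_iff, h.not_gt, or_false]

def SameVisibilityOn (x y : ι → ℝ) (a b : ι) : Prop :=
  ∀ i j, a ≤ i → j ≤ b → (Visible x i j ↔ Visible y i j)

def IsCut (x : ι → ℝ) (a b c : ι) : Prop :=
  ∀ u v, a ≤ u → u < c → c < v → v ≤ b → ¬ Visible x u v

theorem IsCut.mono {a' b' : ι} (h : IsCut x a b c) (ha : a ≤ a') (hb : b' ≤ b) :
    IsCut x a' b' c :=
  fun u v hau huc hcv hvb => h u v (ha.trans hau) huc hcv (hvb.trans hb)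

theorem isCut_of_forall_Icc_le (h : ∀ k ∈ Set.Icc a b, x k ≤ x c) : IsCut x a b c :=
  fun u _ hau huc hcv hvb hvis => (hvis.2 c ⟨huc, hcv⟩).not_ge
    ((min_le_left _ _).trans (h u ⟨hau, (huc.trans hcv).le.trans hvb⟩))

theorem isCut_of_forall_Ioo_le (hmax : ∀ k ∈ Set.Ioo a b, x k ≤ x c)
    (hc : min (x a) (x b) ≤ x c) : IsCut x a b c := by
  intro u v hau huc hcv hvb hvis
  have hlt : x c < min (x u) (x v) := hvis.2 c ⟨huc, hcv⟩
  rcases hau.eq_or_lt with rfl | hau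
  · rcases hvb.eq_or_lt with rfl | hvb
    · exact hc.not_gt hlt
    · exact (hmax v ⟨huc.trans hcv, hvb⟩).not_gt (hlt.trans_le (min_le_right _ _))
  · exact (hmax u ⟨hau, huc.trans (hcv.trans_le hvb)⟩).not_gt (hlt.trans_le (min_le_left _ _))

theorem SameVisibilityOn.glue (hac : SameVisibilityOn x y a c) (hcb : SameVisibilityOn x y c b)
    (hx : IsCut x a b c) (hy : IsCut y a b c) : SameVisibilityOn x y a b := by
  intro i j hai hjb
  by_cases hjc : j ≤ c
  · exact hac i j hai hjc
  by_cases hci : c ≤ i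
  · exact hcb i j hci hjb
  exact iff_of_false (hx i j hai (not_le.1 hci) (not_le.1 hjc) hjb)
    (hy i j hai (not_le.1 hci) (not_le.1 hjc) hjb)

structure IsNormalForm (x y : ι → ℝ) (a b : ι) : Prop where
  sameVisibilityOn : SameVisibilityOn x y a b
  left_eq_zero : y a = 0
  right_eq_zero : y b = 0
  nonpos : ∀ k ∈ Set.Icc a b, y k ≤ 0

theorem isNormalForm_of_forall_lt_min (h : ∀ k ∈ Set.Ioo a b, x k < min (x a) (x b)) :
    IsNormalForm x (fun k => min (x k - min (x a) (x b)) 0) a b := by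
  set m := min (x a) (x b)
  refine ⟨fun i j hai hjb => ?_, ?_, ?_, fun k _ => min_le_right _ _⟩
  · rcases lt_or_ge i j with hij | hji
    swap
    · exact iff_of_false (fun hv => hji.not_gt hv.1) (fun hv => hji.not_gt hv.1)
    have hle : min (x i) (x j) ≤ m := by
      rcases hai.eq_or_lt with rfl | hai
      · rcases hjb.eq_or_lt with rfl | hjb
        · exact le_rfl
        · exact (min_le_right _ _).trans (h j ⟨hai.trans_lt hij, hjb⟩).le
      · exact (min_le_left _ _).trans (h i ⟨hai, hij.trans_le hjb⟩).le
    have hshift : Visible (fun k => x k - m) i j ↔ Visible x i j :=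
      visible_comp_strictMono fun _ _ h => sub_lt_sub_right h m
    refine ((visible_min_const_iff ?_).trans hshift).symm
    rw [min_sub_sub_right]
    exact sub_nonpos.2 hle
  · simp [m]
  · simp [m]

theorem IsNormalForm.glue {y₁ y₂ : ι → ℝ} (h₁ : IsNormalForm x y₁ a c)
    (h₂ : IsNormalForm x y₂ c b) (hx : IsCut x a b c) (hac : a ≤ c) (hcb : c ≤ b) :
    IsNormalForm x ((Set.Iic c).piecewise y₁ y₂) a b := by
  set y := (Set.Iic c).piecewise y₁ y₂
  have hleft : ∀ k ≤ c, y k = y₁ k := fun k hk => Set.piecewise_eq_of_mem _ _ _ hk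
  have hright : ∀ k, c ≤ k → y k = y₂ k := by
    intro k hck
    rcases hck.eq_or_lt with hck | hck
    · rw [← hck, hleft c le_rfl, h₁.right_eq_zero, h₂.left_eq_zero]
    · exact Set.piecewise_eq_of_notMem _ _ _ (not_le.2 hck)
  have hnonpos : ∀ k ∈ Set.Icc a b, y k ≤ 0 := by
    rintro k ⟨hak, hkb⟩
    rcases le_total k c with hkc | hck
    · exact hleft k hkc ▸ h₁.nonpos k ⟨hak, hkc⟩
    · exact hright k hck ▸ h₂.nonpos k ⟨hck, hkb⟩
  refine ⟨SameVisibilityOn.glue (fun i j hai hjc => ?_) (fun i j hci hjb => ?_) hx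
      (isCut_of_forall_Icc_le ?_), by rw [hleft a hac, h₁.left_eq_zero],
    by rw [hright b hcb, h₂.right_eq_zero], hnonpos⟩
  · exact (h₁.sameVisibilityOn i j hai hjc).trans
      (visible_congr fun k hk => (hleft k (hk.2.trans hjc)).symm)
  · exact (h₂.sameVisibilityOn i j hci hjb).trans
      (visible_congr fun k hk => (hright k (hci.trans hk.1)).symm)
  · intro k hk
    rw [hleft c le_rfl, h₁.right_eq_zero]
    exact hnonpos k hk

theorem exists_isNormalForm [LocallyFiniteOrder ι] (x : ι → ℝ) (a b : ι) :
    ∃ y, IsNormalForm x y a b := by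
  induction hn : (Finset.Ioo a b).card using Nat.strong_induction_on generalizing a b with
  | _ n ih =>
  by_cases h : ∀ k ∈ Set.Ioo a b, x k < min (x a) (x b)
  · exact ⟨_, isNormalForm_of_forall_lt_min h⟩
  obtain ⟨k, hk, hxk⟩ : ∃ k ∈ Set.Ioo a b, min (x a) (x b) ≤ x k := by
    simpa only [not_forall, not_lt, exists_prop] using h
  obtain ⟨c, hc, hmax⟩ := (Finset.Ioo a b).exists_max_image x ⟨k, Finset.mem_Ioo.2 hk⟩
  have hmax' : ∀ k ∈ Set.Ioo a b, x k ≤ x c := fun k hk => hmax k (Finset.mem_Ioo.2 hk)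
  rw [Finset.mem_Ioo] at hc
  have hac : (Finset.Ioo a c).card < n := hn ▸ Finset.card_lt_card
    ((Finset.ssubset_iff_of_subset (Finset.Ioo_subset_Ioo_right hc.2.le)).2
      ⟨c, Finset.mem_Ioo.2 hc, by simp⟩)
  have hcb : (Finset.Ioo c b).card < n := hn ▸ Finset.card_lt_card
    ((Finset.ssubset_iff_of_subset (Finset.Ioo_subset_Ioo_left hc.1.le)).2
      ⟨c, Finset.mem_Ioo.2 hc, by simp⟩)
  obtain ⟨y₁, h₁⟩ := ih _ hac a c rfl
  obtain ⟨y₂, h₂⟩ := ih _ hcb c b rfl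
  exact ⟨_, h₁.glue h₂ (isCut_of_forall_Ioo_le hmax' (hxk.trans (hmax' k hk))) hc.1.le hc.2.le⟩

theorem visible_raise_iff {l u v : ι} (hy : ∀ k ∈ Set.Icc a b, y k ≤ 0) (hj : y j = 0)
    (hl : y l = 0) (hjl : j < l) (hau : a ≤ u) (hvb : v ≤ b) :
    Visible (fun k => if k = j ∨ k = l then 1 else y k) u v ↔ Visible y u v ∨ u = j ∧ v = l := by
  set z : ι → ℝ := fun k => if k = j ∨ k = l then 1 else y k
  have hz_raised : ∀ k, k = j ∨ k = l → z k = 1 := fun k hk => if_pos hk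
  have hz_nonpos : ∀ k ∈ Set.Icc a b, ¬(k = j ∨ k = l) → z k ≤ 0 := fun k hk hkjl =>
    (if_neg hkjl).trans_le (hy k hk)
  have htrunc : ∀ k ∈ Set.Icc a b, min (z k) 0 = y k := by
    intro k hk
    by_cases hkjl : k = j ∨ k = l
    · rw [hz_raised k hkjl]
      rcases hkjl with rfl | rfl <;> simp [hj, hl]
    · exact (min_eq_left (hz_nonpos k hk hkjl)).trans (if_neg hkjl)
  rcases lt_or_ge u v with huv | hvu
  swap
  · exact iff_of_false (fun h => hvu.not_gt h.1) fun h => h.elim (fun h => hvu.not_gt h.1)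
      fun ⟨hu, hv⟩ => hvu.not_gt (hu ▸ hv ▸ hjl)
  by_cases hjl' : u = j ∧ v = l
  · obtain ⟨rfl, rfl⟩ := hjl'
    refine iff_of_true ⟨hjl, fun k hk => ?_⟩ (Or.inr ⟨rfl, rfl⟩)
    rw [hz_raised u (Or.inl rfl), hz_raised v (Or.inr rfl), min_self]
    refine (hz_nonpos k ⟨hau.trans hk.1.le, hk.2.le.trans hvb⟩ ?_).trans_lt one_pos
    rintro (rfl | rfl)
    exacts [lt_irrefl _ hk.1, lt_irrefl _ hk.2]
  -- Truncating at `0` undoes the raise, and leaves a pair alone unless both its ends were raised.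
  rw [or_iff_left hjl', ← visible_min_const_iff (m := 0)]
  · exact visible_congr fun k hk => htrunc k ⟨hau.trans hk.1, hk.2.trans hvb⟩
  by_cases hu : u = j ∨ u = l
  · by_cases hv : v = j ∨ v = l
    · exfalso
      rcases hu with rfl | rfl <;> rcases hv with rfl | rfl
      exacts [lt_irrefl _ huv, hjl' ⟨rfl, rfl⟩, huv.not_gt hjl, lt_irrefl _ huv]
    · exact (min_le_right _ _).trans (hz_nonpos v ⟨hau.trans huv.le, hvb⟩ hv)
  · exact (min_le_left _ _).trans (hz_nonpos u ⟨hau, huv.le.trans hvb⟩ hu)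

theorem exists_visible_iff_or_eq [LocallyFiniteOrder ι] {l : ι} (hj : IsCut x a b j)
    (hl : IsCut x a b l) (haj : a ≤ j) (hjl : j < l) (hlb : l ≤ b) :
    ∃ z : ι → ℝ, ∀ u v, a ≤ u → v ≤ b → (Visible z u v ↔ Visible x u v ∨ u = j ∧ v = l) := by
  obtain ⟨y₁, h₁⟩ := exists_isNormalForm x a j
  obtain ⟨y₂, h₂⟩ := exists_isNormalForm x j l
  obtain ⟨y₃, h₃⟩ := exists_isNormalForm x l b
  have h₁₂ := h₁.glue h₂ (hj.mono le_rfl hlb) haj hjl.le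
  have h := h₁₂.glue h₃ hl (haj.trans hjl.le) hlb
  set y := (Set.Iic l).piecewise ((Set.Iic j).piecewise y₁ y₂) y₃
  have hyj : y j = 0 := by simp [y, hjl.le, h₁.right_eq_zero]
  have hyl : y l = 0 := by simpa [y] using h₁₂.right_eq_zero
  refine ⟨fun k => if k = j ∨ k = l then 1 else y k, fun u v hau hvb => ?_⟩
  rw [visible_raise_iff h.nonpos hyj hyl hjl hau hvb, h.sameVisibilityOn u v hau hvb]

end Visibility

variable {N : ℕ}

theorem hvg_adj_iff (x : Fin N → ℝ) (u v : Fin N) :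
    (HVG x).Adj u v ↔ Visible x u v ∨ Visible x v u := by
  simp only [HVG, Visible, Set.mem_Ioo, lt_min_iff, and_imp]
  rcases lt_trichotomy u v with huv | rfl | hvu
  · simp [huv, huv.ne, huv.le, huv.not_gt]
  · simp
  · simp [hvu, hvu.ne', hvu.le, hvu.not_gt, and_comm]

theorem isCut_of_nonnested {x : Fin N → ℝ} {a b c : Fin N} (h : Nonnested (HVG x) c) :
    IsCut x a b c :=
  fun u v _ huc hcv _ hvis => h ⟨u, v, huc, hcv, (hvg_adj_iff x u v).2 (Or.inl hvis)⟩

theorem hvg_sup_edge_mem_hvgs {x : Fin N → ℝ} {j l : Fin N} (hj : Nonnested (HVG x) j)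
    (hl : Nonnested (HVG x) l) (hjl : j < l) :
    HVG x ⊔ SimpleGraph.fromEdgeSet {s(j, l)} ∈ HVGs N := by
  have hbot : ∀ u : Fin N, ⟨0, j.pos⟩ ≤ u := fun u => Fin.le_iff_val_le_val.2 (Nat.zero_le _)
  have htop : ∀ u : Fin N, u ≤ ⟨N - 1, by omega⟩ := fun u =>
    Fin.le_iff_val_le_val.2 (Nat.le_sub_one_of_lt u.isLt)
  obtain ⟨z, hz⟩ := exists_visible_iff_or_eq (isCut_of_nonnested hj) (isCut_of_nonnested hl)
    (hbot j) hjl (htop l)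
  have hvis : ∀ u v, Visible (Real.exp ∘ z) u v ↔ Visible x u v ∨ u = j ∧ v = l := fun u v =>
    (visible_comp_strictMono Real.exp_strictMono).trans (hz u v (hbot u) (htop v))
  refine ⟨Real.exp ∘ z, fun i => (Real.exp_pos _).le, ?_⟩
  ext u v
  simp only [SimpleGraph.sup_adj, hvg_adj_iff, hvis, SimpleGraph.fromEdgeSet_adj,
    Set.mem_singleton_iff, Sym2.eq_iff]
  grind

end HorizontalVisibility

open HorizontalVisibility

theorem hvg_add_edge_general (N : ℕ) (G : SimpleGraph (Fin N)) (hG : G ∈ HVGs N)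
    (j l : Fin N) (hj : Nonnested G j) (hl : Nonnested G l) :
    G ⊔ SimpleGraph.fromEdgeSet {s(j, l)} ∈ HVGs N := by
  obtain ⟨D, hD, rfl⟩ := hG
  rcases lt_trichotomy j l with hjl | rfl | hlj
  · exact hvg_sup_edge_mem_hvgs hj hl hjl
  · exact ⟨D, hD, by ext; simp⟩
  · rw [Sym2.eq_swap]
    exact hvg_sup_edge_mem_hvgs hl hj hlj

/-- adding an edge between two non-nested vertices of an HVG
yields an HVG. -/
theorem hvg_add_edge (N : ℕ) (G : SimpleGraph (Fin N)) (hG : G ∈ HVGs N)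
    (j l : Fin N) (hj : Nonnested G j) (hl : Nonnested G l) (hjl : j ≠ l)
    (hne : ¬ G.Adj j l) :
    G ⊔ SimpleGraph.fromEdgeSet {s(j, l)} ∈ HVGs N :=
  hvg_add_edge_general N G hG j l hj hl
end

section
/- Every HVG decomposes as the 1-sum of the induced subgraphs between consecutive non-nested vertices: if G ∈ 𝒢_N has non-nested vertices i_1 < ... < i_k, then G = G_{[i_1,i_2]} + G_{[i_2,i_3]} + ... + G_{[i_{k-1},i_k]}. -/
/-!
The first and last vertices are always non-nested, so for an edge `uv` with `u < v` there is a
last non-nested vertex `e j ≤ u`, and a next one `e (j + 1) > u`. Since `e (j + 1)` is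
non-nested and `u < e (j + 1)`, the edge cannot jump over it, so `v ≤ e (j + 1)`: every edge
lies in one of the intervals `[e j, e (j + 1)]`.
-/

theorem Monotone.exists_castSucc_le_lt_succ {α : Type*} [LinearOrder α] :
    ∀ {n : ℕ} {e : Fin (n + 1) → α}, Monotone e → ∀ {a : α} {i₀ i₁ : Fin (n + 1)},
      e i₀ ≤ a → a < e i₁ → ∃ j : Fin n, e j.castSucc ≤ a ∧ a < e j.succ
  | 0, e, _, a, i₀, i₁, h₀, h₁ => by
    rw [Fin.fin_one_eq_zero i₀] at h₀
    rw [Fin.fin_one_eq_zero i₁] at h₁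
    exact absurd h₀ h₁.not_ge
  | n + 1, e, he, a, i₀, i₁, h₀, h₁ => by
    by_cases hlast : a < e (Fin.last n).castSucc
    · obtain ⟨j, hj⟩ := (he.comp Fin.strictMono_castSucc.monotone).exists_castSucc_le_lt_succ
        (i₀ := 0) (he (Fin.zero_le i₀) |>.trans h₀) hlast
      exact ⟨j.castSucc, hj⟩
    · exact ⟨Fin.last n, not_lt.1 hlast, h₁.trans_le (he (Fin.le_last i₁))⟩

section
variable {N : ℕ} {G : SimpleGraph (Fin N)}

theorem nonnested_mk_zero (h : 0 < N) : Nonnested G ⟨0, h⟩ :=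
  fun ⟨_, _, hu, _, _⟩ => Nat.not_lt_zero _ hu

theorem nonnested_mk_sub_one (h : 0 < N) : Nonnested G ⟨N - 1, Nat.sub_one_lt_of_lt h⟩ :=
  fun ⟨_, v, _, hv, _⟩ => (Nat.le_sub_one_of_lt v.isLt).not_gt hv

theorem Nonnested.le_of_lt_of_adj {w u v : Fin N} (hw : Nonnested G w) (huw : u < w)
    (hadj : G.Adj u v) : v ≤ w :=
  not_lt.1 fun hwv => hw ⟨u, v, huw, hwv, hadj⟩

theorem exists_nonnested_interval_of_adj {n : ℕ} {e : Fin (n + 1) → Fin N} (he : Monotone e)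
    (hrange : ∀ v, v ∈ Set.range e ↔ Nonnested G v) {u v : Fin N} (huv : u < v)
    (hadj : G.Adj u v) : ∃ j : Fin n, e j.castSucc ≤ u ∧ v ≤ e j.succ := by
  obtain ⟨i₀, hi₀⟩ := (hrange _).2 (nonnested_mk_zero u.pos)
  obtain ⟨i₁, hi₁⟩ := (hrange _).2 (nonnested_mk_sub_one u.pos)
  obtain ⟨j, hju, huj⟩ := he.exists_castSucc_le_lt_succ (i₀ := i₀) (i₁ := i₁)
    (hi₀ ▸ Nat.zero_le u.val) (huv.trans_le (hi₁ ▸ Nat.le_sub_one_of_lt v.isLt))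
  exact ⟨j, hju, ((hrange _).1 ⟨_, rfl⟩).le_of_lt_of_adj huj hadj⟩

theorem eq_iSup_fromRel_nonnested_intervals {n : ℕ} {e : Fin (n + 1) → Fin N}
    (he : Monotone e) (hrange : ∀ v, v ∈ Set.range e ↔ Nonnested G v) :
    G = ⨆ j : Fin n, SimpleGraph.fromRel (fun u v => G.Adj u v ∧
      e j.castSucc ≤ u ∧ u ≤ e j.succ ∧ e j.castSucc ≤ v ∧ v ≤ e j.succ) := by
  ext u v
  simp only [SimpleGraph.iSup_adj, SimpleGraph.fromRel_adj]
  refine ⟨fun hadj => ?_, fun ⟨_, _, h⟩ => h.elim (·.1) (·.1.symm)⟩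
  wlog huv : u < v generalizing u v
  · obtain ⟨j, hne, h⟩ := this v u hadj.symm ((lt_or_gt_of_ne hadj.ne).resolve_left huv)
    exact ⟨j, hne.symm, h.symm⟩
  obtain ⟨j, hju, hvj⟩ := exists_nonnested_interval_of_adj he hrange huv hadj
  exact ⟨j, hadj.ne, .inl ⟨hadj, hju, huv.le.trans hvj, hju.trans huv.le, hvj⟩⟩

end

/-- an HVG is the union (1-sum) of its induced subgraphs between
consecutive non-nested vertices: if `e` enumerates the non-nested vertices in
increasing order, `G` is the supremum of the subgraphs spanned by the edges
with both endpoints in an interval `[e j, e (j+1)]`. -/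
theorem hvg_decomposition (N k : ℕ) (D : Fin N → ℝ) (e : Fin k → Fin N)
    (hmono : StrictMono e)
    (hrange : ∀ v : Fin N, v ∈ Set.range e ↔ Nonnested (HVG D) v) :
    HVG D = ⨆ j : Fin (k - 1), SimpleGraph.fromRel (fun u v =>
      (HVG D).Adj u v ∧
      e ⟨j.val, by have := j.isLt; omega⟩ ≤ u ∧
      u ≤ e ⟨j.val + 1, by have := j.isLt; omega⟩ ∧
      e ⟨j.val, by have := j.isLt; omega⟩ ≤ v ∧
      v ≤ e ⟨j.val + 1, by have := j.isLt; omega⟩) := by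
  cases k with
  | zero =>
    ext u
    obtain ⟨i, -⟩ := (hrange _).2 (nonnested_mk_zero u.pos)
    exact i.elim0
  | succ n => exact eq_iSup_fromRel_nonnested_intervals hmono.monotone hrange
end

section
/- For any HVG G on [N] realizable by a sequence with pairwise distinct entries, define σ to be the unique permutation of [N] ordering the vertices first by decreasing nesting degree and, among equal nesting degrees, from right to left (larger vertex gets smaller σ-value position, i.e., appears earlier). Then the sequence D with d_i = σ(i) satisfies HVG(D) = G; in particular d_1 = N. -/
/-- The nesting degree of a vertex: the number of edges `ij` with `i < v < j`. -/
noncomputable def nestDeg {N : ℕ} (G : SimpleGraph (Fin N)) (v : Fin N) : ℕ :=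
  Set.ncard {p : Fin N × Fin N | p.1 < v ∧ v < p.2 ∧ G.Adj p.1 p.2}

/-!
With distinct entries, adjacency in `HVG D` depends only on the order of the vertices by
(nesting degree, position): `i < j` are adjacent iff every vertex strictly between them comes
after both in that order. If `ij` is an edge, a vertex `k` between its ends sees `ij` pass over
it and, since HVG edges never cross, also every edge over `i` or over `j`. If `ij` is not an
edge, let `k` carry the largest entry between them. When `D k > D j`, every edge over `k` also
passes over `j`. When `D k > D i`, every edge over `k` passes over `i`, and so does the edge
from `k` to the nearest larger entry on its left; if there is none, `k` is not nested at all.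
The sequence `d = σ + 1` reverses exactly this order, so it has the same HVG; vertex `0` is
unnested and leftmost, hence last in the order, and `d 0 = N`.
-/

open Function

section NestDeg

variable {N : ℕ} {G : SimpleGraph (Fin N)} {u v : Fin N}

def edgesOver (G : SimpleGraph (Fin N)) (v : Fin N) : Set (Fin N × Fin N) :=
  {p | p.1 < v ∧ v < p.2 ∧ G.Adj p.1 p.2}

lemma nestDeg_eq_ncard_edgesOver : nestDeg G v = (edgesOver G v).ncard := rfl

lemma nestDeg_le_of_subset (h : edgesOver G u ⊆ edgesOver G v) : nestDeg G u ≤ nestDeg G v :=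
  Set.ncard_le_ncard h (Set.toFinite _)

lemma nestDeg_lt_of_ssubset (h : edgesOver G u ⊂ edgesOver G v) : nestDeg G u < nestDeg G v :=
  Set.ncard_lt_ncard h (Set.toFinite _)

lemma nestDeg_eq_zero (h : ∀ a b, a < v → v < b → ¬ G.Adj a b) : nestDeg G v = 0 := by
  rw [nestDeg_eq_ncard_edgesOver, Set.ncard_eq_zero]
  exact Set.eq_empty_of_forall_notMem fun p ⟨ha, hb, hab⟩ => h _ _ ha hb hab

/-- Listing the vertices by decreasing `nestKey` is the order defining `σ`: decreasing nesting
degree, ties broken from right to left. -/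
noncomputable def nestKey (G : SimpleGraph (Fin N)) (v : Fin N) : ℕ ×ₗ Fin N :=
  toLex (nestDeg G v, v)

lemma nestKey_lt_of_nestDeg_lt (h : nestDeg G u < nestDeg G v) : nestKey G u < nestKey G v :=
  Prod.Lex.toLex_lt_toLex.2 (Or.inl h)

lemma nestKey_lt_of_nestDeg_le (h : nestDeg G u ≤ nestDeg G v) (huv : u < v) :
    nestKey G u < nestKey G v :=
  Prod.Lex.toLex_lt_toLex.2 (h.lt_or_eq.imp id fun h => ⟨h, huv⟩)

lemma nestKey_zero_le (hN : 0 < N) (v : Fin N) : nestKey G ⟨0, hN⟩ ≤ nestKey G v := by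
  have h0 : nestDeg G ⟨0, hN⟩ = 0 :=
    nestDeg_eq_zero fun a _ ha => absurd (Fin.lt_def.1 ha) (Nat.not_lt_zero _)
  refine Prod.Lex.toLex_le_toLex.2 ?_
  rcases (nestDeg G v).eq_zero_or_pos with hv | hv
  · exact Or.inr ⟨h0.trans hv.symm, Fin.le_def.2 (Nat.zero_le _)⟩
  · exact Or.inl (h0.trans_lt hv)

end NestDeg

section HVG

variable {N : ℕ} {D : Fin N → ℝ} {i j k : Fin N}

lemma hvg_adj_iff_of_lt (hij : i < j) :
    (HVG D).Adj i j ↔ ∀ k, i < k → k < j → D k < D i ∧ D k < D j := by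
  simp only [HVG, min_eq_left hij.le, max_eq_right hij.le, ne_eq, hij.ne, not_false_eq_true,
    true_and]

lemma hvg_lt_of_adj (hij : (HVG D).Adj i j) (hik : i < k) (hkj : k < j) :
    D k < D i ∧ D k < D j :=
  (hvg_adj_iff_of_lt (hik.trans hkj)).1 hij k hik hkj

lemma hvg_not_adj_of_cross {a b : Fin N} (hai : a < i) (hib : i < b) (hbj : b < j)
    (hab : (HVG D).Adj a b) : ¬ (HVG D).Adj i j := fun hij =>
  lt_asymm (hvg_lt_of_adj hab hai hib).2 (hvg_lt_of_adj hij hib hbj).1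

lemma nestDeg_lt_of_adj (hij : (HVG D).Adj i j) (hik : i < k) (hkj : k < j) :
    nestDeg (HVG D) i < nestDeg (HVG D) k ∧ nestDeg (HVG D) j < nestDeg (HVG D) k := by
  have hmem : (i, j) ∈ edgesOver (HVG D) k := ⟨hik, hkj, hij⟩
  constructor
  · refine nestDeg_lt_of_ssubset ((Set.ssubset_iff_of_subset ?_).2
      ⟨(i, j), hmem, fun h => lt_irrefl i h.1⟩)
    rintro ⟨a, b⟩ ⟨hai, hib, hab⟩
    refine ⟨hai.trans hik, lt_of_not_ge fun hbk => ?_, hab⟩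
    exact hvg_not_adj_of_cross hai hib (hbk.trans_lt hkj) hab hij
  · refine nestDeg_lt_of_ssubset ((Set.ssubset_iff_of_subset ?_).2
      ⟨(i, j), hmem, fun h => lt_irrefl j h.2.1⟩)
    rintro ⟨a, b⟩ ⟨haj, hjb, hab⟩
    refine ⟨lt_of_not_ge fun hka => ?_, hkj.trans hjb, hab⟩
    exact hvg_not_adj_of_cross (hik.trans_le hka) haj hjb hij hab

/-- The nearest larger entry to the left of `k` sees `k`. -/
lemma exists_adj_left_of_lt (hD : Injective D) {x : Fin N} (hxk : x < k) (hx : D k < D x) :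
    ∃ a < k, D k < D a ∧ (HVG D).Adj a k := by
  obtain ⟨a, ha, hmax⟩ := (Finset.univ.filter fun y => y < k ∧ D k < D y).exists_max_image id
    ⟨x, by simp [hxk, hx]⟩
  simp only [Finset.mem_filter, Finset.mem_univ, true_and, id] at ha hmax
  refine ⟨a, ha.1, ha.2, (hvg_adj_iff_of_lt ha.1).2 fun y hay hyk => ?_⟩
  have hyk' : D y < D k := lt_of_le_of_ne
    (not_lt.1 fun h => (hmax y ⟨hyk, h⟩).not_gt hay) (hD.ne hyk.ne)
  exact ⟨hyk'.trans ha.2, hyk'⟩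

lemma exists_isMax_between_of_not_adj (hD : Injective D) (hij : i < j)
    (hadj : ¬ (HVG D).Adj i j) :
    ∃ k, i < k ∧ k < j ∧ (∀ m, i < m → m < j → D m ≤ D k) ∧ (D i < D k ∨ D j < D k) := by
  rw [hvg_adj_iff_of_lt hij] at hadj
  push Not at hadj
  obtain ⟨k₀, hik₀, hk₀j, hk₀⟩ := hadj
  obtain ⟨k, hk, hmax⟩ := (Finset.univ.filter fun m => i < m ∧ m < j).exists_max_image D
    ⟨k₀, by simp [hik₀, hk₀j]⟩
  simp only [Finset.mem_filter, Finset.mem_univ, true_and] at hk hmax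
  have hk₀k := hmax k₀ ⟨hik₀, hk₀j⟩
  refine ⟨k, hk.1, hk.2, fun m him hmj => hmax m ⟨him, hmj⟩, ?_⟩
  by_cases hi : D i ≤ D k₀
  · exact Or.inl (lt_of_le_of_ne (hi.trans hk₀k) (hD.ne hk.1.ne))
  · exact Or.inr (lt_of_le_of_ne ((hk₀ (not_le.1 hi)).trans hk₀k) (hD.ne hk.2.ne'))

/-- Every edge over `k` has both ends above `D k`, so it cannot end in `(k, j]`. -/
lemma nestDeg_le_of_isMax_between (hik : i < k) (hkj : k < j)
    (hmax : ∀ m, i < m → m < j → D m ≤ D k) (hjk : D j < D k) :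
    nestDeg (HVG D) k ≤ nestDeg (HVG D) j := by
  refine nestDeg_le_of_subset ?_
  rintro ⟨a, b⟩ ⟨hak, hkb, hab⟩
  refine ⟨hak.trans hkj, lt_of_not_ge fun hbj => ?_, hab⟩
  have hkb' : D k < D b := (hvg_lt_of_adj hab hak hkb).2
  rcases hbj.lt_or_eq with hbj | rfl
  · exact (hmax b (hik.trans hkb) hbj).not_gt hkb'
  · exact lt_asymm hjk hkb'

lemma nestDeg_lt_or_eq_zero_of_isMax_between (hD : Injective D) (hik : i < k) (hkj : k < j)
    (hmax : ∀ m, i < m → m < j → D m ≤ D k) (hik' : D i < D k) :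
    nestDeg (HVG D) k < nestDeg (HVG D) i ∨ nestDeg (HVG D) k = 0 := by
  have hleft : ∀ a, a < k → D k < D a → a < i := by
    intro a hak hka
    refine lt_of_not_ge fun hia => ?_
    rcases hia.lt_or_eq with hia | rfl
    · exact (hmax a hia (hak.trans hkj)).not_gt hka
    · exact lt_asymm hik' hka
  by_cases hx : ∃ x < k, D k < D x
  · obtain ⟨x, hxk, hx⟩ := hx
    obtain ⟨a, hak, hka, hadj⟩ := exists_adj_left_of_lt hD hxk hx
    refine Or.inl (nestDeg_lt_of_ssubset ((Set.ssubset_iff_of_subset ?_).2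
      ⟨(a, k), ⟨hleft a hak hka, hik, hadj⟩, fun h => lt_irrefl k h.2.1⟩))
    rintro ⟨a', b⟩ ⟨hak', hkb, hab⟩
    exact ⟨hleft a' hak' (hvg_lt_of_adj hab hak' hkb).1, hik.trans hkb, hab⟩
  · push Not at hx
    exact Or.inr (nestDeg_eq_zero fun a b hak hkb hab =>
      (hx a hak).not_gt (hvg_lt_of_adj hab hak hkb).1)

lemma hvg_adj_iff_nestKey (hD : Injective D) (hij : i < j) :
    (HVG D).Adj i j ↔ ∀ k, i < k → k < j →
      nestKey (HVG D) i < nestKey (HVG D) k ∧ nestKey (HVG D) j < nestKey (HVG D) k := by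
  refine ⟨fun hadj k hik hkj => ?_, fun h => by_contra fun hadj => ?_⟩
  · obtain ⟨hi, hj⟩ := nestDeg_lt_of_adj hadj hik hkj
    exact ⟨nestKey_lt_of_nestDeg_lt hi, nestKey_lt_of_nestDeg_lt hj⟩
  obtain ⟨k, hik, hkj, hmax, hbig⟩ := exists_isMax_between_of_not_adj hD hij hadj
  obtain ⟨hi, hj⟩ := h k hik hkj
  have hkj' : ¬ nestDeg (HVG D) k ≤ nestDeg (HVG D) j := fun hle =>
    lt_asymm hj (nestKey_lt_of_nestDeg_le hle hkj)
  rcases hbig with hbig | hbig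
  · rcases nestDeg_lt_or_eq_zero_of_isMax_between hD hik hkj hmax hbig with hlt | hzero
    · exact lt_asymm hi (nestKey_lt_of_nestDeg_lt hlt)
    · exact hkj' (hzero ▸ Nat.zero_le _)
  · exact hkj' (nestDeg_le_of_isMax_between hik hkj hmax hbig)

lemma hvg_eq_of_lt_iff_nestKey_lt {d : Fin N → ℝ} (hD : Injective D)
    (hd : ∀ x y, d x < d y ↔ nestKey (HVG D) y < nestKey (HVG D) x) : HVG d = HVG D := by
  have hlt : ∀ i j : Fin N, i < j → ((HVG d).Adj i j ↔ (HVG D).Adj i j) := fun i j hij => by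
    rw [hvg_adj_iff_of_lt hij, hvg_adj_iff_nestKey hD hij]
    simp only [hd]
  ext i j
  rcases lt_trichotomy i j with hij | rfl | hij
  · exact hlt i j hij
  · simp
  · rw [SimpleGraph.adj_comm, hlt j i hij, SimpleGraph.adj_comm]

end HVG

lemma Equiv.Perm.lt_iff_toLex_lt_of_sorted {α β : Type*} [LinearOrder α] [LinearOrder β]
    (σ : Equiv.Perm α) (f : α → β) (hsort : ∀ i j, i ≤ j → f (σ.symm j) ≤ f (σ.symm i))
    (hties : ∀ i j, f (σ.symm i) = f (σ.symm j) → (i < j ↔ σ.symm j < σ.symm i)) (x y : α) :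
    σ x < σ y ↔ toLex (f y, y) < toLex (f x, x) := by
  have hanti : StrictAnti fun i => toLex (f (σ.symm i), σ.symm i) := fun i j hij =>
    Prod.Lex.toLex_lt_toLex.2 <|
      (hsort i j hij.le).lt_or_eq.imp id fun h => ⟨h, (hties i j h.symm).1 hij⟩
  simpa using (hanti.lt_iff_gt (a := σ y) (b := σ x)).symm

/-- if `G ∈ 𝒢_{N,≠}` and `σ` orders the vertices by decreasing
nesting degree, breaking ties from right to left, then the sequence
`d_i = σ(i)` realizes `G`; in particular `d_1 = N`. -/
theorem hvg_standard_sequence (N : ℕ) (hN : 1 ≤ N) (G : SimpleGraph (Fin N))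
    (hG : G ∈ HVGsDistinct N) (σ : Equiv.Perm (Fin N))
    (hsort : ∀ i j : Fin N, i ≤ j → nestDeg G (σ.symm j) ≤ nestDeg G (σ.symm i))
    (hties : ∀ i j : Fin N, nestDeg G (σ.symm i) = nestDeg G (σ.symm j) →
      (i < j ↔ σ.symm j < σ.symm i)) :
    HVG (fun i => ((σ i).val + 1 : ℝ)) = G ∧ (σ ⟨0, by omega⟩).val + 1 = N := by
  obtain ⟨D, hD, rfl⟩ := hG
  have hσ : ∀ x y, σ x < σ y ↔ nestKey (HVG D) y < nestKey (HVG D) x :=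
    σ.lt_iff_toLex_lt_of_sorted _ hsort hties
  refine ⟨hvg_eq_of_lt_iff_nestKey_lt hD fun x y => ?_, ?_⟩
  · rw [← hσ, Fin.lt_def, add_lt_add_iff_right, Nat.cast_lt]
  · have htop : ∀ y, σ y ≤ σ ⟨0, by omega⟩ := fun y =>
      not_lt.1 fun h => ((hσ _ _).1 h).not_ge (nestKey_zero_le hN y)
    have hlast := htop (σ.symm ⟨N - 1, by omega⟩)
    rw [Equiv.apply_symm_apply, Fin.le_def, Fin.val_mk] at hlast
    have := (σ ⟨0, by omega⟩).isLt
    omega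
end

section
/- If G is an HVG on [N] (N ≥ 3) realizable by a sequence with pairwise distinct entries and G is not the path P_N, then there exists an inner vertex i with 2 ≤ i ≤ N-1 such that deg_G(i) = 2 and (i-1)(i+1) ∈ E(G). -/
/-- The path `P_N` on `[N]` with edges `i(i+1)`. -/
def pathHVG (N : ℕ) : SimpleGraph (Fin N) :=
  SimpleGraph.fromRel (fun u v => v.val = u.val + 1)

/-! If `D` has a strict local minimum at an inner index `m`, the neighbours `m - 1` and `m + 1`
block every longer edge at `m`, so `m` has degree 2, and they see each other over `m`.
If `D` has no such minimum, there is no edge `ij` with `j ≥ i + 2`: the lowest entry strictly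
between `i` and `j` lies below `D i` and `D j` and, the entries being distinct, below its own
neighbours, so it would be one. Then the HVG is the path. -/

namespace HVG

variable {N : ℕ} {D : Fin N → ℝ}

theorem adj_iff_of_lt {i j : Fin N} (hij : i < j) :
    (HVG D).Adj i j ↔ ∀ k, i < k → k < j → D k < D i ∧ D k < D j := by
  simp only [HVG, hij.ne, ne_eq, not_false_eq_true, true_and, min_eq_left hij.le,
    max_eq_right hij.le]

theorem adj_of_val_eq_succ {i j : Fin N} (h : j.val = i.val + 1) : (HVG D).Adj i j :=
  (adj_iff_of_lt (by omega)).2 fun k hik hkj => by omega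

theorem pathHVG_le : pathHVG N ≤ HVG D := by
  intro i j hij
  rw [pathHVG, SimpleGraph.fromRel_adj] at hij
  obtain h | h := hij.2
  · exact adj_of_val_eq_succ h
  · exact (adj_of_val_eq_succ h).symm

def IsInnerStrictLocalMin (D : Fin N → ℝ) (m : Fin N) : Prop :=
  0 < m.val ∧ m.val + 1 < N ∧ ∀ k : Fin N, (k.val + 1 = m.val ∨ k.val = m.val + 1) → D m < D k

namespace IsInnerStrictLocalMin

variable {m : Fin N}

theorem adj_iff {k : Fin N} (hm : IsInnerStrictLocalMin D m) : (HVG D).Adj m k ↔ k.val + 1 = m.val ∨ k.val = m.val + 1 := by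
  refine ⟨fun hadj => ?_, fun h => h.elim (fun h => (adj_of_val_eq_succ h.symm).symm)
    adj_of_val_eq_succ⟩
  by_contra hfar
  rcases lt_or_gt_of_ne hadj.ne with hmk | hkm
  · have hblock := ((adj_iff_of_lt hmk).1 hadj ⟨m.val + 1, hm.2.1⟩ (by simp only [Fin.lt_def]; omega)
      (by simp only [Fin.lt_def]; omega)).1
    exact hblock.not_gt (hm.2.2 _ (Or.inr rfl))
  · have hblock := ((adj_iff_of_lt hkm).1 hadj.symm ⟨m.val - 1, by omega⟩
      (by simp only [Fin.lt_def]; omega) (by simp only [Fin.lt_def]; omega)).2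
    exact hblock.not_gt (hm.2.2 _ (Or.inl (by simp only; omega)))

theorem ncard_neighborSet (hm : IsInnerStrictLocalMin D m) : ((HVG D).neighborSet m).ncard = 2 := by
  have hnbrs : (HVG D).neighborSet m = {⟨m.val - 1, by omega⟩, ⟨m.val + 1, hm.2.1⟩} := by
    ext k
    simp only [SimpleGraph.mem_neighborSet, hm.adj_iff, Set.mem_insert_iff,
      Set.mem_singleton_iff, Fin.ext_iff]
    have := hm.1
    omega
  rw [hnbrs, Set.ncard_pair (by simp only [ne_eq, Fin.ext_iff]; omega)]

theorem adj_pred_succ (hm : IsInnerStrictLocalMin D m) : (HVG D).Adj ⟨m.val - 1, by omega⟩ ⟨m.val + 1, hm.2.1⟩ := by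
  refine (adj_iff_of_lt (by simp only [Fin.lt_def]; omega)).2 fun k hk hk' => ?_
  obtain rfl : k = m := by simp only [Fin.lt_def] at hk hk'; omega
  have := hm.1
  exact ⟨hm.2.2 _ (Or.inl (by simp only; omega)), hm.2.2 _ (Or.inr rfl)⟩

end IsInnerStrictLocalMin

theorem exists_isInnerStrictLocalMin_of_adj (hD : Function.Injective D) {i j : Fin N}
    (hadj : (HVG D).Adj i j) (hlong : i.val + 1 < j.val) :
    ∃ m, i < m ∧ m < j ∧ IsInnerStrictLocalMin D m := by
  have hne : (Finset.Ioo i j).Nonempty :=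
    ⟨⟨i.val + 1, by omega⟩, by simp only [Finset.mem_Ioo, Fin.lt_def]; omega⟩
  obtain ⟨m, hm, hmin⟩ := Finset.exists_min_image _ D hne
  rw [Finset.mem_Ioo] at hm
  have hends := (adj_iff_of_lt (hm.1.trans hm.2)).1 hadj m hm.1 hm.2
  refine ⟨m, hm.1, hm.2, by omega, by omega, fun k hk => ?_⟩
  by_cases hkij : k = i ∨ k = j
  · rcases hkij with rfl | rfl
    exacts [hends.1, hends.2]
  · have hk_mem : k ∈ Finset.Ioo i j := by
      rw [Finset.mem_Ioo]; omega
    exact (hmin k hk_mem).lt_of_ne (hD.ne (by omega))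

theorem exists_isInnerStrictLocalMin_of_ne_pathHVG (hD : Function.Injective D)
    (hpath : HVG D ≠ pathHVG N) : ∃ m, IsInnerStrictLocalMin D m := by
  obtain ⟨i, j, hadj, hnot⟩ : ∃ i j, (HVG D).Adj i j ∧ ¬ (pathHVG N).Adj i j := by
    by_contra! h
    exact hpath (le_antisymm h pathHVG_le)
  rw [pathHVG, SimpleGraph.fromRel_adj] at hnot
  rcases lt_or_gt_of_ne hadj.ne with hij | hji
  · obtain ⟨m, -, -, hm⟩ := exists_isInnerStrictLocalMin_of_adj hD hadj (by omega)
    exact ⟨m, hm⟩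
  · obtain ⟨m, -, -, hm⟩ := exists_isInnerStrictLocalMin_of_adj hD hadj.symm (by omega)
    exact ⟨m, hm⟩

end HVG

/-- any `G ∈ 𝒢_{N,≠}` (`N ≥ 3`) other than the path `P_N` has an
inner vertex `i` of degree `2` whose two neighbors `i-1` and `i+1` are adjacent. -/
theorem hvg_inner_two (N : ℕ) (G : SimpleGraph (Fin N))
    (hG : G ∈ HVGsDistinct N) (hpath : G ≠ pathHVG N) :
    ∃ (i : Fin N) (h1 : 0 < i.val) (h2 : i.val + 1 < N),
      (G.neighborSet i).ncard = 2 ∧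
      G.Adj ⟨i.val - 1, by omega⟩ ⟨i.val + 1, h2⟩ := by
  obtain ⟨D, hD, rfl⟩ := hG
  obtain ⟨m, hm⟩ := HVG.exists_isInnerStrictLocalMin_of_ne_pathHVG hD hpath
  exact ⟨m, hm.1, hm.2.1, hm.ncard_neighborSet, hm.adj_pred_succ⟩
end

section
/- For 2 ≤ s ≤ N, the number of HVGs on [N] realizable with distinct entries and whose vertex 1 has maximal neighbor s satisfies the product formula |𝒢_{N,≠}^s| = |𝒢_{s,≠}^s| · |𝒢_{N-s+1,≠}|. -/
/-!
If vertex `1` sees vertex `s` but nothing beyond it, no edge jumps over `s`: an edge `uv` with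
`1 < u < s < v` would need `d_s < d_u`, while `1 ~ s` forces `d_u < d_s`. Hence the graph is
determined by its restrictions to `[1, s]` and `[s, N]`, which are HVGs of subsequences and so
again realizable with distinct entries. Conversely, given realizations `a` of a graph in
`𝒢_{s,≠}^s` and `b` of one in `𝒢_{N-s+1,≠}`, translate `b` above every entry of `a` and glue the
two at `s`, the last entry of `a` being replaced by `b_1`. This keeps the HVG of `a`, whose
interior entries lie below `a_1 < b_1`, and since `d_1 < d_s` vertex `1` sees nothing beyond `s`.
In `Fin N` the paper's vertex `i` is `⟨i - 1, _⟩`.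
-/

section

open Function Set

variable {N : ℕ}

lemma hvg_adj_iff (D : Fin N → ℝ) (i j : Fin N) :
    (HVG D).Adj i j ↔ i.val ≠ j.val ∧
      ∀ k : Fin N, min i.val j.val < k.val → k.val < max i.val j.val →
        D k < D i ∧ D k < D j := by
  simp only [HVG, Fin.ne_iff_vne, Fin.lt_def, Fin.coe_min, Fin.coe_max]

lemma hvg_eq_of_lt_iff {D D' : Fin N → ℝ}
    (h : ∀ i k : Fin N, 0 < k.val → k.val + 1 < N → (D k < D i ↔ D' k < D' i)) :
    HVG D = HVG D' := by
  ext i j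
  simp only [hvg_adj_iff]
  refine and_congr_right fun _ => forall_congr' fun k => imp_congr_right fun hik =>
    imp_congr_right fun hkj => and_congr (h i k ?_ ?_) (h j k ?_ ?_) <;> omega

lemma hvg_add_const (D : Fin N → ℝ) (c : ℝ) : HVG (fun i => D i + c) = HVG D :=
  hvg_eq_of_lt_iff fun _ _ _ _ => add_lt_add_iff_right c

lemma le_of_hvg_adj_of_lt {D : Fin N → ℝ} {i m l : Fin N} (him : i < m) (hD : D i < D m)
    (hadj : (HVG D).Adj i l) : l ≤ m := by
  by_contra! hml
  rw [Fin.lt_def] at him hml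
  have hm := ((hvg_adj_iff D i l).1 hadj).2 m (by omega) (by omega)
  linarith [hm.1]

lemma nonnested_hvg {D : Fin N → ℝ} {m : Fin N} (h0 : 0 < N) (hadj : (HVG D).Adj ⟨0, h0⟩ m)
    (hmax : ∀ l, (HVG D).Adj ⟨0, h0⟩ l → l ≤ m) : Nonnested (HVG D) m := by
  rintro ⟨u, v, hum, hmv, huv⟩
  rcases Nat.eq_zero_or_pos u.val with hu | hu
  · obtain rfl : u = ⟨0, h0⟩ := Fin.ext hu
    exact (hmax v huv).not_gt hmv
  rw [Fin.lt_def] at hum hmv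
  have hmu := ((hvg_adj_iff D u v).1 huv).2 m (by omega) (by omega)
  have hum' := ((hvg_adj_iff D _ m).1 hadj).2 u (by simp; omega) (by omega)
  linarith [hmu.1, hum'.2]

def window (c : ℕ) {M : ℕ} (h : c + M ≤ N) (i : Fin M) : Fin N := ⟨i.val + c, by omega⟩

section Window

variable {c M : ℕ} (h : c + M ≤ N)

lemma window_injective : Injective (window c h) := fun i j hij =>
  Fin.ext (by simpa [window] using congrArg Fin.val hij)

lemma mem_range_window {k : Fin N} : k ∈ range (window c h) ↔ c ≤ k.val ∧ k.val < c + M := by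
  refine ⟨?_, fun hk => ⟨⟨k.val - c, by omega⟩, Fin.ext (by simp [window]; omega)⟩⟩
  rintro ⟨i, rfl⟩
  simp [window]
  omega

lemma hvg_comp_window (D : Fin N → ℝ) : HVG (D ∘ window c h) = (HVG D).comap (window c h) := by
  ext i j
  simp only [SimpleGraph.comap_adj, hvg_adj_iff, comp_apply, window]
  constructor
  · rintro ⟨hne, hD⟩
    refine ⟨by omega, fun k hk hk' => ?_⟩
    obtain ⟨k, rfl⟩ := (mem_range_window h).2 (by omega : c ≤ k.val ∧ k.val < c + M)
    exact hD k (by simp [window] at hk; omega) (by simp [window] at hk'; omega)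
  · rintro ⟨hne, hD⟩
    exact ⟨by omega, fun k hk hk' => hD (window c h k) (by simp [window]; omega)
      (by simp [window]; omega)⟩

lemma comap_window_mem_hvgsDistinct {G : SimpleGraph (Fin N)} (hG : G ∈ HVGsDistinct N) :
    G.comap (window c h) ∈ HVGsDistinct M := by
  obtain ⟨D, hD, rfl⟩ := hG
  exact ⟨D ∘ window c h, hD.comp (window_injective h), hvg_comp_window h D⟩

lemma adj_iff_of_comap_window_eq {G G' : SimpleGraph (Fin N)}
    (hGG' : G.comap (window c h) = G'.comap (window c h)) {u v : Fin N}
    (hu : u ∈ range (window c h)) (hv : v ∈ range (window c h)) : G.Adj u v ↔ G'.Adj u v := by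
  obtain ⟨u, rfl⟩ := hu
  obtain ⟨v, rfl⟩ := hv
  exact iff_of_eq (congrArg (fun H => H.Adj u v) hGG')

end Window

lemma exists_add_const_gt {ι κ : Type*} [Finite ι] [Finite κ] (a : ι → ℝ) (b : κ → ℝ) :
    ∃ c : ℝ, ∀ i j, a i < b j + c := by
  obtain ⟨A, hA⟩ := (finite_range a).bddAbove
  obtain ⟨B, hB⟩ := (finite_range b).bddBelow
  exact ⟨A - B + 1, fun i j => by linarith [hA (mem_range_self i), hB (mem_range_self j)]⟩

lemma hvg_update_last {s : ℕ} (hs : 0 < s) {a : Fin s → ℝ}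
    (hadj : (HVG a).Adj ⟨0, hs⟩ ⟨s - 1, by omega⟩) {v : ℝ} (hv : a ⟨0, hs⟩ < v) :
    HVG (update a ⟨s - 1, by omega⟩ v) = HVG a := by
  refine hvg_eq_of_lt_iff fun i k hk0 hks => ?_
  obtain ⟨hk_first, hk_last⟩ :=
    ((hvg_adj_iff a _ _).1 hadj).2 k (by simp; omega) (by simp; omega)
  rw [update_of_ne (Fin.ne_of_val_ne (by simp; omega))]
  by_cases hi : i = ⟨s - 1, by omega⟩
  · subst hi
    rw [update_self]
    exact iff_of_true (by linarith) hk_last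
  · rw [update_of_ne hi]

section Split

variable {s : ℕ} (hs : 1 ≤ s) (hsN : s ≤ N)

def splitAt (G : SimpleGraph (Fin N)) : SimpleGraph (Fin s) × SimpleGraph (Fin (N - s + 1)) :=
  (G.comap (window 0 (by omega : 0 + s ≤ N)),
    G.comap (window (s - 1) (by omega : s - 1 + (N - s + 1) ≤ N)))

lemma eq_of_splitAt_eq {G G' : SimpleGraph (Fin N)} (hG : Nonnested G ⟨s - 1, by omega⟩)
    (hG' : Nonnested G' ⟨s - 1, by omega⟩) (h : splitAt hs hsN G = splitAt hs hsN G') :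
    G = G' := by
  simp only [splitAt, Prod.mk.injEq] at h
  ext u v
  by_cases hl : u.val ≤ s - 1 ∧ v.val ≤ s - 1
  · exact adj_iff_of_comap_window_eq _ h.1 ((mem_range_window _).2 (by omega))
      ((mem_range_window _).2 (by omega))
  by_cases hr : s - 1 ≤ u.val ∧ s - 1 ≤ v.val
  · exact adj_iff_of_comap_window_eq _ h.2 ((mem_range_window _).2 (by omega))
      ((mem_range_window _).2 (by omega))
  rcases (by omega : (u.val < s - 1 ∧ s - 1 < v.val) ∨ (v.val < s - 1 ∧ s - 1 < u.val)) with
    ⟨hu, hv⟩ | ⟨hv, hu⟩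
  · exact iff_of_false (fun huv => hG ⟨u, v, hu, hv, huv⟩) (fun huv => hG' ⟨u, v, hu, hv, huv⟩)
  · exact iff_of_false (fun huv => hG ⟨v, u, hv, hu, huv.symm⟩)
      (fun huv => hG' ⟨v, u, hv, hu, huv.symm⟩)

end Split

lemma exists_injective_splitAt_hvg_eq {s : ℕ} (hs : 1 < s) (hsN : s ≤ N) {a : Fin s → ℝ}
    {b : Fin (N - s + 1) → ℝ} (ha : Injective a) (hb : Injective b)
    (hadj : (HVG a).Adj ⟨0, by omega⟩ ⟨s - 1, by omega⟩) (hab : ∀ i j, a i < b j) :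
    ∃ D : Fin N → ℝ, Injective D ∧ splitAt (by omega) hsN (HVG D) = (HVG a, HVG b) ∧
      D ⟨0, by omega⟩ < D ⟨s - 1, by omega⟩ := by
  let D : Fin N → ℝ := fun x =>
    if hx : x.val < s - 1 then a ⟨x.val, by omega⟩ else b ⟨x.val - (s - 1), by omega⟩
  have hleft : D ∘ window 0 (by omega : 0 + s ≤ N) =
      update a ⟨s - 1, by omega⟩ (b ⟨0, by omega⟩) := by
    funext i
    by_cases hi : i.val < s - 1
    · have hne : i ≠ ⟨s - 1, by omega⟩ := Fin.ne_of_val_ne (by simp; omega)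
      simp [D, window, hi, update_of_ne hne]
    · rw [show i = ⟨s - 1, by omega⟩ from Fin.ext (by simp; omega)]
      simp [D, window]
  have hright : D ∘ window (s - 1) (by omega : s - 1 + (N - s + 1) ≤ N) = b := by
    funext j
    simp [D, window]
  refine ⟨D, ?_, ?_, ?_⟩
  · intro x y hxy
    simp only [D] at hxy
    split_ifs at hxy with hx hy hy
    · exact Fin.ext (by simpa using congrArg Fin.val (ha hxy))
    · exact absurd hxy (hab _ _).ne
    · exact absurd hxy (hab _ _).ne'
    · exact Fin.ext (by have := congrArg Fin.val (hb hxy); simp at this; omega)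
  · rw [splitAt, ← hvg_comp_window, ← hvg_comp_window, hleft, hright,
      hvg_update_last _ hadj (hab _ _)]
  · simpa [D, show 1 < s by omega] using hab _ _

end

/-- for `2 ≤ s ≤ N`,
`|𝒢_{N,≠}^s| = |𝒢_{s,≠}^s| ⬝ |𝒢_{N-s+1,≠}|`, where `𝒢_{N,≠}^s` consists of the
HVGs (with distinct entries) whose vertex `1` has maximal neighbor `s`. -/
theorem hvg_count_product (N s : ℕ) (h2 : 2 ≤ s) (hsN : s ≤ N) :
    {G : SimpleGraph (Fin N) | G ∈ HVGsDistinct N ∧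
        G.Adj ⟨0, by omega⟩ ⟨s - 1, by omega⟩ ∧
        ∀ l : Fin N, G.Adj ⟨0, by omega⟩ l → l.val ≤ s - 1}.ncard =
      {G : SimpleGraph (Fin s) | G ∈ HVGsDistinct s ∧
        G.Adj ⟨0, by omega⟩ ⟨s - 1, by omega⟩}.ncard *
      (HVGsDistinct (N - s + 1)).ncard := by
  rw [← Set.ncard_prod]
  refine Set.BijOn.ncard_eq (f := splitAt (by omega) hsN) ⟨?_, ?_, ?_⟩
  · rintro G ⟨hG, hadj, -⟩
    exact ⟨⟨comap_window_mem_hvgsDistinct _ hG, hadj⟩, comap_window_mem_hvgsDistinct _ hG⟩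
  · rintro _ ⟨⟨D, -, rfl⟩, hadj, hmax⟩ _ ⟨⟨D', -, rfl⟩, hadj', hmax'⟩
    exact eq_of_splitAt_eq _ hsN (nonnested_hvg _ hadj hmax) (nonnested_hvg _ hadj' hmax')
  · rintro ⟨-, -⟩ ⟨⟨⟨a, ha, rfl⟩, hadj⟩, ⟨b, hb, rfl⟩⟩
    obtain ⟨c, hc⟩ := exists_add_const_gt a b
    obtain ⟨D, hD, hsplitD, hlt⟩ := exists_injective_splitAt_hvg_eq h2 hsN ha
      (fun i j hij => hb (add_right_cancel hij)) hadj hc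
    refine ⟨HVG D, ⟨⟨D, hD, rfl⟩, ?_, fun l => le_of_hvg_adj_of_lt (by simp; omega) hlt⟩, ?_⟩
    · change (splitAt (by omega) hsN (HVG D)).1.Adj ⟨0, by omega⟩ ⟨s - 1, by omega⟩
      rwa [hsplitD]
    · rw [hsplitD, hvg_add_const]
end

section
/- If G ∈ 𝒢_{s,≠} is an HVG on [s] with edge 1s (equivalently m_G(1) = s), then the neighborhood of vertex s in G equals the set of non-nested vertices of the induced subgraph G_{[1,s-1]}. -/
/-!
Write `w = s - 1`. An HVG never has crossing edges `uv`, `aw` with `u < a < v < w`, since then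
`D a < D v` and `D v < D a`; so a neighbour of `w` is not nested in `G_{[1,s-1]}`. Conversely, the
edge `0w` makes `D w` larger than everything before it, so if `a` is not adjacent to `w` some entry
of `(a, w)` exceeds `D a`. The maximal entry `v` of `(a, w)` then lies above `D a`, and the nearest
entry to the left of `v` that exceeds `D v` (the edge `0w` guarantees one) sits left of `a` and
sees `v`: this edge nests `a`.
-/

namespace HVG

variable {N : ℕ} {D : Fin N → ℝ}

theorem not_adj_of_crossing {u v a w : Fin N} (huv : (HVG D).Adj u v) (hua : u < a)
    (hav : a < v) (hvw : v < w) : ¬ (HVG D).Adj a w := fun haw =>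
  ((adj_iff_of_lt (hua.trans hav)).1 huv a hua hav).2.asymm
    ((adj_iff_of_lt (hav.trans hvw)).1 haw v hav hvw).1

theorem exists_adj_of_lt (hD : Function.Injective D) {u v : Fin N} (huv : u < v)
    (h : D v < D u) : ∃ u' < v, D v < D u' ∧ (HVG D).Adj u' v := by
  set S := (Finset.Iio v).filter fun k => D v < D k
  have huS : u ∈ S := Finset.mem_filter.2 ⟨Finset.mem_Iio.2 huv, h⟩
  obtain ⟨u', hu'S, hmax⟩ := S.exists_max_image id ⟨u, huS⟩
  obtain ⟨hu'v, hvu'⟩ := Finset.mem_filter.1 hu'S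
  refine ⟨u', Finset.mem_Iio.1 hu'v, hvu', (adj_iff_of_lt (Finset.mem_Iio.1 hu'v)).2 ?_⟩
  intro k hu'k hkv
  have hkS : k ∉ S := fun hkS => (hmax k hkS).not_gt hu'k
  have hkv' : D k < D v :=
    (not_lt.1 fun h => hkS (Finset.mem_filter.2 ⟨Finset.mem_Iio.2 hkv, h⟩)).lt_of_ne
      (hD.ne hkv.ne)
  exact ⟨hkv'.trans hvu', hkv'⟩

theorem exists_adj_nesting_of_not_adj (hD : Function.Injective D) {u a w : Fin N}
    (huw : (HVG D).Adj u w) (hua : u ≤ a) (haw : a < w) (hna : ¬ (HVG D).Adj a w) :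
    ∃ u' v, u' < a ∧ a < v ∧ v < w ∧ (HVG D).Adj u' v := by
  have hua : u < a := hua.lt_of_ne fun h => hna (h ▸ huw)
  have hbelow : ∀ k, a < k → k < w → D k < D u ∧ D k < D w := fun k hak hkw =>
    (adj_iff_of_lt (hua.trans haw)).1 huw k (hua.trans hak) hkw
  obtain ⟨k, hak, hkw, hk⟩ : ∃ k, a < k ∧ k < w ∧ D a ≤ D k := by
    by_contra! h
    exact hna ((adj_iff_of_lt haw).2 fun k hak hkw => ⟨h k hak hkw, (hbelow k hak hkw).2⟩)
  obtain ⟨v, hvI, hvmax⟩ := (Finset.Ioo a w).exists_max_image D ⟨k, Finset.mem_Ioo.2 ⟨hak, hkw⟩⟩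
  obtain ⟨hav, hvw⟩ := Finset.mem_Ioo.1 hvI
  have hDav : D a < D v :=
    (hk.trans (hvmax k (Finset.mem_Ioo.2 ⟨hak, hkw⟩))).lt_of_ne (hD.ne hav.ne)
  obtain ⟨u', hu'v, hvu', hadj⟩ := exists_adj_of_lt hD (hua.trans hav) (hbelow v hav hvw).1
  refine ⟨u', v, ?_, hav, hvw, hadj⟩
  by_contra! hau'
  rcases hau'.eq_or_lt with rfl | hau'
  · exact hDav.asymm hvu'
  · exact (hvmax u' (Finset.mem_Ioo.2 ⟨hau', hu'v.trans hvw⟩)).not_gt hvu'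

end HVG

/-- if `G ∈ 𝒢_{s,≠}` contains the edge `1s`, then the neighbors
of vertex `s` are exactly the non-nested vertices of the induced subgraph
`G_{[1,s-1]}`. -/
theorem hvg_neighbors_of_last (s : ℕ) (hs : 2 ≤ s) (G : SimpleGraph (Fin s))
    (hG : G ∈ HVGsDistinct s) (htop : G.Adj ⟨0, by omega⟩ ⟨s - 1, by omega⟩) :
    ∀ a : Fin (s - 1),
      G.Adj ⟨s - 1, by omega⟩ ⟨a.val, by have := a.isLt; omega⟩ ↔
      Nonnested (G.comap fun b : Fin (s - 1) =>
        (⟨b.val, by have := b.isLt; omega⟩ : Fin s)) a := by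
  obtain ⟨D, hD, rfl⟩ := hG
  intro a
  constructor
  · rintro haw ⟨u, v, hua, hav, huv⟩
    exact HVG.not_adj_of_crossing huv hua hav v.isLt haw.symm
  · intro hnested
    by_contra hna
    obtain ⟨u, v, hua, hav, hvw, huv⟩ := HVG.exists_adj_nesting_of_not_adj hD htop
      (Nat.zero_le a.val) a.isLt fun h => hna h.symm
    exact hnested ⟨⟨u, by omega⟩, ⟨v, hvw⟩, hua, hav, huv⟩
end

section
/- The number of HVGs on N vertices arising from data sequences with pairwise distinct entries equals the (N-1)-st Catalan number: |𝒢_{N,≠}| = C_{N-1} = (1/N)·binom(2N-2, N-1). -/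
open Set hiding antidiagonal mem_antidiagonal
open Function Finset.HasAntidiagonal

section Visibility

variable {α β : Type*} [LinearOrder α] [LinearOrder β]

def Visible (D : ℕ → α) (i j : ℕ) : Prop :=
  i < j ∧ ∀ k, i < k → k < j → D k < D i ∧ D k < D j

def hvgEdges (D : ℕ → α) (n : ℕ) : Set (ℕ × ℕ) :=
  {e | e.2 ≤ n ∧ Visible D e.1 e.2}

@[simp] lemma mem_hvgEdges {D : ℕ → α} {n a b : ℕ} :
    (a, b) ∈ hvgEdges D n ↔ b ≤ n ∧ Visible D a b :=
  Iff.rfl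

lemma visible_succ (D : ℕ → α) (i : ℕ) : Visible D i (i + 1) :=
  ⟨i.lt_succ_self, fun _ hik hki => absurd hki (by omega)⟩

lemma Visible.not_cross {D : ℕ → α} {a b c d : ℕ} (h₁ : Visible D a b) (h₂ : Visible D c d)
    (hac : a < c) (hcb : c < b) (hbd : b < d) : False :=
  (h₁.2 c hac hcb).2.asymm (h₂.2 b hcb hbd).1

lemma Visible.exists_split {D : ℕ → α} {i j : ℕ} (h : Visible D i j) (hD : InjOn D (Ioo i j))
    (hij : i + 1 < j) : ∃ m, Visible D i m ∧ Visible D m j := by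
  obtain ⟨m, hm, hmax⟩ := (Finset.Ioo i j).exists_max_image D ⟨i + 1, by simp; omega⟩
  rw [Finset.mem_Ioo] at hm
  have lt_m : ∀ k, i < k → k < j → k ≠ m → D k < D m := fun k hik hkj hkm =>
    (hmax k (Finset.mem_Ioo.2 ⟨hik, hkj⟩)).lt_of_ne (hD.ne ⟨hik, hkj⟩ hm hkm)
  exact ⟨m, ⟨hm.1, fun k hik hkm => ⟨(h.2 k hik (hkm.trans hm.2)).1,
      lt_m k hik (hkm.trans hm.2) hkm.ne⟩⟩,
    ⟨hm.2, fun k hmk hkj => ⟨lt_m k (hm.1.trans hmk) hkj hmk.ne', (h.2 k (hm.1.trans hmk) hkj).2⟩⟩⟩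

lemma visible_add_iff {D : ℕ → α} {j a b : ℕ} :
    Visible (fun i => D (i + j)) a b ↔ Visible D (a + j) (b + j) := by
  simp only [Visible, add_lt_add_iff_right]
  refine and_congr_right fun _ =>
    ⟨fun h k hak hkb => ?_, fun h k hak hkb => h (k + j) (by omega) (by omega)⟩
  have := h (k - j) (by omega) (by omega)
  rwa [Nat.sub_add_cancel (by omega : j ≤ k)] at this

lemma hvgEdges_congr {D : ℕ → α} {D' : ℕ → β} {n : ℕ}
    (h : ∀ k c, 0 < k → k < n → c ≤ n → (D k < D c ↔ D' k < D' c)) :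
    hvgEdges D n = hvgEdges D' n := by
  ext ⟨a, b⟩
  simp only [mem_hvgEdges, Visible]
  refine and_congr_right fun hb => and_congr_right fun hab => forall₂_congr fun k hak => ?_
  exact imp_congr_right fun hkb => and_congr (h k a (by omega) (by omega) (by omega))
    (h k b (by omega) (by omega) hb)

lemma hvgEdges_comp_swap {D : ℕ → α} {n : ℕ} (h : Visible D 0 n) :
    hvgEdges (D ∘ Equiv.swap 0 n) n = hvgEdges D n := by
  refine hvgEdges_congr fun k c hk hkn _ => ?_
  have hk' := h.2 k hk hkn
  simp only [comp, Equiv.swap_apply_of_ne_of_ne hk.ne' hkn.ne]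
  rcases eq_or_ne c 0 with rfl | hc0
  · rw [Equiv.swap_apply_left]
    exact iff_of_true hk'.2 hk'.1
  rcases eq_or_ne c n with rfl | hcn
  · rw [Equiv.swap_apply_right]
    exact iff_of_true hk'.1 hk'.2
  · rw [Equiv.swap_apply_of_ne_of_ne hc0 hcn]

def valueRank (D : ℕ → α) (n i : ℕ) : ℕ :=
  ((Finset.range (n + 1)).filter fun k => D k < D i).card

lemma valueRank_lt_valueRank_iff {D : ℕ → α} {n i k : ℕ} (hk : k ≤ n) :
    valueRank D n k < valueRank D n i ↔ D k < D i := by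
  refine ⟨fun h => not_le.1 fun hik => h.not_ge (Finset.card_le_card ?_),
    fun h => Finset.card_lt_card ?_⟩
  · exact Finset.monotone_filter_right _ fun l _ hl => hl.trans_le hik
  · refine (Finset.ssubset_iff_of_subset ?_).2 ⟨k, ?_, ?_⟩
    · exact Finset.monotone_filter_right _ fun l _ hl => hl.trans h
    · simpa [Nat.lt_succ_iff] using ⟨hk, h⟩
    · simp

end Visibility

section Gluing

variable {α : Type*}

lemma injOn_comp_swap {D : ℕ → α} {n : ℕ} (hD : InjOn D (Iic n)) :
    InjOn (D ∘ Equiv.swap 0 n) (Iic n) := by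
  refine hD.comp (Equiv.injective _).injOn fun x hx => ?_
  rw [mem_Iic] at hx ⊢
  rw [Equiv.swap_apply_def]
  split_ifs <;> omega

def shiftEdges (j : ℕ) (B : Set (ℕ × ℕ)) : Set (ℕ × ℕ) :=
  Prod.map (· + j) (· + j) '' B

lemma mem_shiftEdges {j a b : ℕ} {B : Set (ℕ × ℕ)} :
    (a, b) ∈ shiftEdges j B ↔ j ≤ a ∧ j ≤ b ∧ (a - j, b - j) ∈ B := by
  constructor
  · rintro ⟨⟨a', b'⟩, h, he⟩
    simp only [Prod.map, Prod.mk.injEq] at he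
    obtain ⟨rfl, rfl⟩ := he
    simpa using h
  · rintro ⟨ha, hb, h⟩
    exact ⟨_, h, by simp [Prod.map, Nat.sub_add_cancel ha, Nat.sub_add_cancel hb]⟩

/-- A graph on `[0, j]` and a graph on `[0, m]`, glued along vertex `j` of the first and
vertex `0` of the second. -/
def glue (j : ℕ) (A B : Set (ℕ × ℕ)) : Set (ℕ × ℕ) :=
  A ∪ shiftEdges j B

/-- Data realising `glue j`: vertex `i ≤ j` sits on level `D₂ 0` at height `D₁ i`, and vertex
`j + k` on level `D₂ k` at height `D₁ j`. -/
def glueData (D₁ D₂ : ℕ → α) (j i : ℕ) : α ×ₗ α :=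
  toLex (D₂ (i - j), D₁ (min i j))

variable {D₁ D₂ : ℕ → α} {j m : ℕ}

lemma glueData_of_le {i : ℕ} (hi : i ≤ j) : glueData D₁ D₂ j i = toLex (D₂ 0, D₁ i) := by
  simp [glueData, Nat.sub_eq_zero_of_le hi, min_eq_left hi]

lemma glueData_add (k : ℕ) : glueData D₁ D₂ j (k + j) = toLex (D₂ k, D₁ j) := by
  simp [glueData]

lemma injOn_glueData (h₁ : InjOn D₁ (Iic j)) (h₂ : InjOn D₂ (Iic m)) :
    InjOn (glueData D₁ D₂ j) (Iic (j + m)) := by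
  intro x hx y hy hxy
  simp only [glueData, toLex_inj, Prod.mk.injEq] at hxy
  rw [mem_Iic] at hx hy
  have := h₂ (show x - j ≤ m by omega) (show y - j ≤ m by omega) hxy.1
  have := h₁ (min_le_right x j) (min_le_right y j) hxy.2
  omega

variable [LinearOrder α]

lemma hvgEdges_add_eq_glue_union (D : ℕ → α) (j m : ℕ) :
    hvgEdges D (j + m) = glue j (hvgEdges D j) (hvgEdges (fun i => D (i + j)) m) ∪
      {e ∈ hvgEdges D (j + m) | e.1 < j ∧ j < e.2} := by
  ext ⟨a, b⟩
  simp only [glue, mem_union, mem_sep_iff, mem_hvgEdges, mem_shiftEdges, visible_add_iff]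
  constructor
  · rintro ⟨hb, hv⟩
    by_cases hbj : b ≤ j
    · exact Or.inl (Or.inl ⟨hbj, hv⟩)
    by_cases hja : j ≤ a
    · refine Or.inl (Or.inr ⟨hja, by omega, by omega, ?_⟩)
      rwa [Nat.sub_add_cancel hja, Nat.sub_add_cancel (by omega)]
    exact Or.inr ⟨⟨hb, hv⟩, by omega, by omega⟩
  · rintro ((⟨hb, hv⟩ | ⟨hja, hjb, hb, hv⟩) | ⟨h, -⟩)
    · exact ⟨by omega, hv⟩
    · rw [Nat.sub_add_cancel hja, Nat.sub_add_cancel hjb] at hv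
      exact ⟨by omega, hv⟩
    · exact h

lemma hvgEdges_glueData : hvgEdges (glueData D₁ D₂ j) j = hvgEdges D₁ j :=
  hvgEdges_congr fun k c _ hk hc => by
    simp [glueData_of_le hk.le, glueData_of_le hc, Prod.Lex.toLex_lt_toLex]

lemma hvgEdges_glueData_add : hvgEdges (fun i => glueData D₁ D₂ j (i + j)) m = hvgEdges D₂ m :=
  hvgEdges_congr fun k c _ _ _ => by simp [glueData_add, Prod.Lex.toLex_lt_toLex]

lemma Visible.glueData_cross {a b : ℕ} (h : Visible (glueData D₁ D₂ j) a b) (haj : a < j)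
    (hjb : j < b) : D₁ j < D₁ a ∧ D₂ 0 < D₂ (b - j) := by
  have := h.2 j haj hjb
  obtain ⟨k, rfl⟩ := Nat.exists_eq_add_of_lt hjb
  rw [glueData_of_le le_rfl, glueData_of_le haj.le, show j + k + 1 = (k + 1) + j by omega,
    glueData_add] at this
  simp [Prod.Lex.toLex_lt_toLex] at this
  simpa [show j + k + 1 - j = k + 1 by omega] using ⟨this.1, this.2⟩

lemma visible_glueData_zero (h₁ : Visible D₁ 0 j) (h₁' : D₁ j < D₁ 0) (h₂ : Visible D₂ 0 m)
    (h₂' : D₂ 0 < D₂ m) : Visible (glueData D₁ D₂ j) 0 (j + m) := by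
  refine ⟨by have := h₁.1; omega, fun k hk hkn => ?_⟩
  rw [glueData_of_le (Nat.zero_le j), add_comm j m, glueData_add]
  rcases le_or_gt k j with hkj | hjk
  · have : D₁ k < D₁ 0 := hkj.lt_or_eq.elim (fun h => (h₁.2 k hk h).1) fun h => h ▸ h₁'
    simp [glueData_of_le hkj, Prod.Lex.toLex_lt_toLex, this, h₂']
  · obtain ⟨i, rfl⟩ := Nat.exists_eq_add_of_lt hjk
    have := h₂.2 (i + 1) (by omega) (by omega)
    rw [show j + i + 1 = i + 1 + j by omega, glueData_add]
    simp [Prod.Lex.toLex_lt_toLex, this.1, this.2]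

end Gluing

def IsHVG (n : ℕ) (E : Set (ℕ × ℕ)) : Prop :=
  ∃ D : ℕ → ℝ, InjOn D (Iic n) ∧ hvgEdges D n = E

def IsArchedHVG (n : ℕ) (E : Set (ℕ × ℕ)) : Prop :=
  IsHVG n E ∧ (0, n) ∈ E

section HVGSets

variable {n j m : ℕ} {E A B : Set (ℕ × ℕ)}

lemma isHVG_hvgEdges {α : Type*} [LinearOrder α] {D : ℕ → α} (hD : InjOn D (Iic n)) :
    IsHVG n (hvgEdges D n) := by
  refine ⟨fun i => (valueRank D n i : ℝ), fun i hi k hk hik => hD hi hk ?_,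
    hvgEdges_congr fun k c _ hk _ => by rw [Nat.cast_lt, valueRank_lt_valueRank_iff hk.le]⟩
  replace hik := Nat.cast_injective hik
  rcases lt_trichotomy (D i) (D k) with h | h | h
  · exact absurd hik ((valueRank_lt_valueRank_iff hi).2 h).ne
  · exact h
  · exact absurd hik ((valueRank_lt_valueRank_iff hk).2 h).ne'

lemma isHVG_hvgEdges_natCast (n : ℕ) : IsHVG n (hvgEdges ((↑) : ℕ → ℝ) n) :=
  isHVG_hvgEdges Nat.cast_injective.injOn

lemma IsHVG.lt_and_le_of_mem (hE : IsHVG n E) {a b : ℕ} (h : (a, b) ∈ E) : a < b ∧ b ≤ n := by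
  obtain ⟨D, -, rfl⟩ := hE
  exact ⟨h.2.1, h.1⟩

lemma isHVG_restrict {D : ℕ → ℝ} (hD : InjOn D (Iic (j + m))) :
    IsHVG j (hvgEdges D j) ∧ IsHVG m (hvgEdges (fun i => D (i + j)) m) :=
  ⟨isHVG_hvgEdges (hD.mono (Iic_subset_Iic.2 (by omega))),
    isHVG_hvgEdges fun x hx y hy hxy => by
      rw [mem_Iic] at hx hy
      have := hD (show x + j ≤ j + m by omega) (show y + j ≤ j + m by omega) hxy
      omega⟩

/-- Both ends of an arch lie above everything between them, so swapping their values changes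
nothing: either end may be taken to be the higher one. -/
lemma IsArchedHVG.exists_data_lt (hE : IsArchedHVG n E) {s t : ℕ}
    (hst : s = 0 ∧ t = n ∨ s = n ∧ t = 0) :
    ∃ D : ℕ → ℝ, InjOn D (Iic n) ∧ hvgEdges D n = E ∧ D s < D t := by
  obtain ⟨⟨D, hD, rfl⟩, -, hv⟩ := hE
  have hne : D s ≠ D t := hD.ne (by rcases hst with ⟨rfl, rfl⟩ | ⟨rfl, rfl⟩ <;> simp)
    (by rcases hst with ⟨rfl, rfl⟩ | ⟨rfl, rfl⟩ <;> simp) (by have := hv.1; omega)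
  rcases hne.lt_or_gt with hlt | hgt
  · exact ⟨D, hD, rfl, hlt⟩
  · refine ⟨D ∘ Equiv.swap 0 n, injOn_comp_swap hD, hvgEdges_comp_swap hv, ?_⟩
    rcases hst with ⟨rfl, rfl⟩ | ⟨rfl, rfl⟩ <;> simpa using hgt

theorem IsArchedHVG.isHVG_glue (hA : IsArchedHVG j A) (hB : IsHVG m B) :
    IsHVG (j + m) (glue j A B) := by
  obtain ⟨D₁, hD₁, rfl, h₁⟩ := hA.exists_data_lt (Or.inl ⟨rfl, rfl⟩)
  obtain ⟨D₂, hD₂, rfl⟩ := hB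
  have hv : Visible D₁ 0 j := hA.2.2
  have hcross : {e ∈ hvgEdges (glueData D₁ D₂ j) (j + m) | e.1 < j ∧ j < e.2} = ∅ := by
    refine eq_empty_of_forall_notMem fun ⟨a, b⟩ ⟨⟨_, hab⟩, haj, hjb⟩ => ?_
    have := (hab.glueData_cross haj hjb).1
    rcases a.eq_zero_or_pos with rfl | ha
    · exact h₁.asymm this
    · exact (hv.2 a ha haj).2.asymm this
  have := isHVG_hvgEdges (injOn_glueData hD₁ hD₂)
  rwa [hvgEdges_add_eq_glue_union, hvgEdges_glueData, hvgEdges_glueData_add, hcross,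
    union_empty] at this

theorem IsArchedHVG.insert_glue (hA : IsArchedHVG j A) (hB : IsArchedHVG m B) :
    IsArchedHVG (j + m) (insert (0, j + m) (glue j A B)) := by
  obtain ⟨D₁, hD₁, rfl, h₁⟩ := hA.exists_data_lt (Or.inr ⟨rfl, rfl⟩)
  obtain ⟨D₂, hD₂, rfl, h₂⟩ := hB.exists_data_lt (Or.inl ⟨rfl, rfl⟩)
  have hv₁ : Visible D₁ 0 j := hA.2.2
  have hv₂ : Visible D₂ 0 m := hB.2.2
  have htop := visible_glueData_zero hv₁ h₁ hv₂ h₂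
  have hcross :
      {e ∈ hvgEdges (glueData D₁ D₂ j) (j + m) | e.1 < j ∧ j < e.2} = {(0, j + m)} := by
    ext ⟨a, b⟩
    simp only [mem_sep_iff, mem_hvgEdges, mem_singleton_iff, Prod.mk.injEq]
    constructor
    · rintro ⟨⟨hb, hab⟩, haj, hjb⟩
      obtain ⟨h₁', h₂'⟩ := hab.glueData_cross haj hjb
      exact ⟨by_contra fun ha => (hv₁.2 a (by omega) haj).2.asymm h₁',
        by_contra fun hb' => (hv₂.2 (b - j) (by omega) (by omega)).1.asymm h₂'⟩
    · rintro ⟨rfl, rfl⟩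
      exact ⟨⟨le_rfl, htop⟩, hv₁.1, by have := hv₂.1; omega⟩
  have hE := hvgEdges_add_eq_glue_union (glueData D₁ D₂ j) j m
  rw [hvgEdges_glueData, hvgEdges_glueData_add, hcross, union_singleton] at hE
  rw [← hE]
  exact ⟨isHVG_hvgEdges (injOn_glueData hD₁ hD₂), le_rfl, htop⟩

theorem IsHVG.exists_eq_glue (hE : IsHVG n E) (hn : 0 < n) :
    ∃ j m A B, j + m = n ∧ IsArchedHVG j A ∧ IsHVG m B ∧ E = glue j A B := by
  classical
  obtain ⟨D, hD, rfl⟩ := hE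
  obtain ⟨j, hj, hmax, hjn⟩ : ∃ j, Visible D 0 j ∧ (∀ k ≤ n, Visible D 0 k → k ≤ j) ∧ j ≤ n :=
    ⟨_, Nat.findGreatest_spec (P := Visible D 0) hn (visible_succ D 0),
      fun k hk hv => Nat.le_findGreatest hk hv, Nat.findGreatest_le n⟩
  obtain ⟨m, rfl⟩ := Nat.exists_eq_add_of_le hjn
  obtain ⟨hA, hB⟩ := isHVG_restrict hD
  refine ⟨j, m, _, _, rfl, ⟨hA, le_rfl, hj⟩, hB, ?_⟩
  have hcross : {e ∈ hvgEdges D (j + m) | e.1 < j ∧ j < e.2} = ∅ := by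
    refine eq_empty_of_forall_notMem fun ⟨a, b⟩ ⟨⟨hb, hab⟩, haj, hjb⟩ => ?_
    rcases a.eq_zero_or_pos with rfl | ha
    · exact (hmax b hb hab).not_gt hjb
    · exact hj.not_cross hab ha haj hjb
  rw [hvgEdges_add_eq_glue_union, hcross, union_empty]

theorem IsArchedHVG.exists_eq_insert_glue (hE : IsArchedHVG n E) (hn : 1 < n) :
    ∃ j m A B, j + m = n ∧ IsArchedHVG j A ∧ IsArchedHVG m B ∧
      E = insert (0, n) (glue j A B) := by
  obtain ⟨⟨D, hD, rfl⟩, -, htop⟩ := hE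
  obtain ⟨j, h₁, h₂⟩ := htop.exists_split (hD.mono fun _ hx => hx.2.le) hn
  obtain ⟨m, rfl⟩ := Nat.exists_eq_add_of_le h₂.1.le
  obtain ⟨hA, hB⟩ := isHVG_restrict hD
  refine ⟨j, m, _, _, rfl, ⟨hA, le_rfl, h₁⟩,
    ⟨hB, le_rfl, visible_add_iff.2 (by rwa [zero_add, add_comm m])⟩, ?_⟩
  have hcross : {e ∈ hvgEdges D (j + m) | e.1 < j ∧ j < e.2} = {(0, j + m)} := by
    ext ⟨a, b⟩
    simp only [mem_sep_iff, mem_hvgEdges, mem_singleton_iff, Prod.mk.injEq]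
    constructor
    · rintro ⟨⟨hb, hab⟩, haj, hjb⟩
      rcases a.eq_zero_or_pos with rfl | ha
      · exact ⟨rfl, by_contra fun hb' => hab.not_cross h₂ h₁.1 hjb (by omega)⟩
      · exact (h₁.not_cross hab ha haj hjb).elim
    · rintro ⟨rfl, rfl⟩
      exact ⟨⟨le_rfl, htop⟩, h₁.1, h₂.1⟩
  rw [hvgEdges_add_eq_glue_union, hcross, union_singleton]

lemma le_of_zero_mem_glue (hA : IsArchedHVG j A) {k : ℕ} (h : (0, k) ∈ glue j A B) : k ≤ j := by
  rcases h with h | h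
  · exact (hA.1.lt_and_le_of_mem h).2
  · have := (hA.1.lt_and_le_of_mem hA.2).1
    exact absurd (mem_shiftEdges.1 h).1 (by omega)

lemma sep_snd_le_glue (hA : IsHVG j A) (hB : IsHVG m B) : {e ∈ glue j A B | e.2 ≤ j} = A := by
  ext ⟨a, b⟩
  refine ⟨fun ⟨h, hb⟩ => h.resolve_right fun h' => ?_,
    fun h => ⟨Or.inl h, (hA.lt_and_le_of_mem h).2⟩⟩
  obtain ⟨ha, -, h'⟩ := mem_shiftEdges.1 h'
  have := (hB.lt_and_le_of_mem h').1
  simp only at hb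
  omega

lemma preimage_glue (hA : IsHVG j A) :
    Prod.map (· + j) (· + j) ⁻¹' glue j A B = B := by
  ext ⟨a, b⟩
  refine ⟨fun h => h.elim (fun h' => ?_) fun h' => ?_, fun h => Or.inr (mem_image_of_mem _ h)⟩
  · have := hA.lt_and_le_of_mem h'
    simp only at this
    omega
  · simpa using (mem_shiftEdges.1 h').2.2

lemma glue_inj {j' m' : ℕ} {A' B' : Set (ℕ × ℕ)} (hA : IsArchedHVG j A) (hA' : IsArchedHVG j' A')
    (hB : IsHVG m B) (hB' : IsHVG m' B') (h : glue j A B = glue j' A' B') :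
    j = j' ∧ A = A' ∧ B = B' := by
  obtain rfl : j = j' := le_antisymm (le_of_zero_mem_glue hA' (by rw [← h]; exact Or.inl hA.2))
    (le_of_zero_mem_glue hA (by rw [h]; exact Or.inl hA'.2))
  exact ⟨rfl, by rw [← sep_snd_le_glue hA.1 hB, h, sep_snd_le_glue hA'.1 hB'],
    by rw [← preimage_glue (B := B) hA.1, h, preimage_glue hA'.1]⟩

lemma finite_setOf_isHVG (n : ℕ) : {E | IsHVG n E}.Finite :=
  ((finite_Iic n).prod (finite_Iic n)).finite_subsets.subset fun _ hE ⟨_, _⟩ he =>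
    have h := hE.lt_and_le_of_mem he
    ⟨(h.1.trans_le h.2).le, h.2⟩

instance (n : ℕ) : Finite {E // IsHVG n E} :=
  (finite_setOf_isHVG n).to_subtype

instance (n : ℕ) : Finite {E // IsArchedHVG n E} :=
  ((finite_setOf_isHVG n).subset fun _ hE => hE.1).to_subtype

lemma natCard_eq_sum_antidiagonal {X Y : ℕ → Type*} [∀ i, Finite (X i)] [∀ i, Finite (Y i)]
    {Z : Type*} (f : (Σ p : antidiagonal n, X p.1.1 × Y p.1.2) → Z) (hf : Bijective f) :
    Nat.card Z = ∑ p ∈ (antidiagonal n : Finset (ℕ × ℕ)), Nat.card (X p.1) * Nat.card (Y p.2) := by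
  rw [← Nat.card_congr (Equiv.ofBijective f hf), Nat.card_sigma]
  simp_rw [Nat.card_prod]
  exact Finset.sum_coe_sort _ fun p : ℕ × ℕ => Nat.card (X p.1) * Nat.card (Y p.2)

theorem card_isHVG_succ (n : ℕ) :
    Nat.card {E // IsHVG (n + 1) E} = ∑ p ∈ antidiagonal n,
      Nat.card {A // IsArchedHVG (p.1 + 1) A} * Nat.card {B // IsHVG p.2 B} := by
  refine natCard_eq_sum_antidiagonal (X := fun i => {A // IsArchedHVG (i + 1) A})
    (Y := fun i => {B // IsHVG i B}) (fun x => ⟨glue (x.1.1.1 + 1) x.2.1 x.2.2, ?_⟩) ⟨?_, ?_⟩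
  · have h : x.1.1.1 + 1 + x.1.1.2 = n + 1 := by
      have := mem_antidiagonal.1 x.1.2
      omega
    rw [← h]
    exact x.2.1.2.isHVG_glue x.2.2.2
  · rintro ⟨⟨p, hp⟩, ⟨A, hA⟩, ⟨B, hB⟩⟩ ⟨⟨p', hp'⟩, ⟨A', hA'⟩, ⟨B', hB'⟩⟩ h
    rw [mem_antidiagonal] at hp hp'
    obtain ⟨hi, rfl, rfl⟩ := glue_inj hA hA' hB hB' (congrArg Subtype.val h)
    obtain rfl : p = p' := Prod.ext (by simpa using hi) (by dsimp only at hi; omega)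
    rfl
  · rintro ⟨E, hE⟩
    obtain ⟨j, m, A, B, hjm, hA, hB, rfl⟩ := hE.exists_eq_glue n.succ_pos
    obtain ⟨i, rfl⟩ : ∃ i, j = i + 1 := Nat.exists_eq_add_one.2 (hA.1.lt_and_le_of_mem hA.2).1
    exact ⟨⟨⟨(i, m), mem_antidiagonal.2 (by omega)⟩, ⟨A, hA⟩, ⟨B, hB⟩⟩, rfl⟩

theorem card_isArchedHVG_succ_succ (n : ℕ) :
    Nat.card {E // IsArchedHVG (n + 2) E} = ∑ p ∈ antidiagonal n,
      Nat.card {A // IsArchedHVG (p.1 + 1) A} * Nat.card {B // IsArchedHVG (p.2 + 1) B} := by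
  refine natCard_eq_sum_antidiagonal (X := fun i => {A // IsArchedHVG (i + 1) A})
    (Y := fun i => {B // IsArchedHVG (i + 1) B})
    (fun x => ⟨insert (0, n + 2) (glue (x.1.1.1 + 1) x.2.1 x.2.2), ?_⟩) ⟨?_, ?_⟩
  · have h : x.1.1.1 + 1 + (x.1.1.2 + 1) = n + 2 := by
      have := mem_antidiagonal.1 x.1.2
      omega
    rw [← h]
    exact x.2.1.2.insert_glue x.2.2.2
  · rintro ⟨⟨p, hp⟩, ⟨A, hA⟩, ⟨B, hB⟩⟩ ⟨⟨p', hp'⟩, ⟨A', hA'⟩, ⟨B', hB'⟩⟩ h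
    rw [mem_antidiagonal] at hp hp'
    have hn : ∀ {j A B}, IsArchedHVG j A → j < n + 2 → (0, n + 2) ∉ glue j A B :=
      fun hA hj h' => (le_of_zero_mem_glue hA h').not_gt hj
    have h' := congrArg Subtype.val h
    dsimp only at hA hA' hB hB' h'
    replace h : glue (p.1 + 1) A B = glue (p'.1 + 1) A' B' := by
      rw [← insert_sdiff_self_of_notMem (hn hA (by omega)), h',
        insert_sdiff_self_of_notMem (hn hA' (by omega))]
    obtain ⟨hi, rfl, rfl⟩ := glue_inj hA hA' hB.1 hB'.1 h
    obtain rfl : p = p' := Prod.ext (by simpa using hi) (by omega)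
    rfl
  · rintro ⟨E, hE⟩
    obtain ⟨j, m, A, B, hjm, hA, hB, rfl⟩ := hE.exists_eq_insert_glue (by omega)
    obtain ⟨i, rfl⟩ : ∃ i, j = i + 1 := Nat.exists_eq_add_one.2 (hA.1.lt_and_le_of_mem hA.2).1
    obtain ⟨k, rfl⟩ : ∃ k, m = k + 1 := Nat.exists_eq_add_one.2 (hB.1.lt_and_le_of_mem hB.2).1
    exact ⟨⟨⟨(i, k), mem_antidiagonal.2 (by omega)⟩, ⟨A, hA⟩, ⟨B, hB⟩⟩, rfl⟩

theorem card_isArchedHVG (n : ℕ) : Nat.card {E // IsArchedHVG (n + 1) E} = catalan n := by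
  induction n using Nat.strong_induction_on with
  | _ n ih =>
  rcases n with _ | n
  · have hE : ∀ E, IsArchedHVG 1 E → E = {(0, 1)} := fun E hE => by
      refine eq_singleton_iff_unique_mem.2 ⟨hE.2, fun ⟨a, b⟩ h => ?_⟩
      have := hE.1.lt_and_le_of_mem h
      simp only [Prod.mk.injEq]
      omega
    rw [catalan_zero, Nat.card_eq_one_iff_unique]
    exact ⟨⟨fun E E' => Subtype.ext ((hE _ E.2).trans (hE _ E'.2).symm)⟩,
      ⟨⟨_, isHVG_hvgEdges_natCast 1, le_rfl, visible_succ _ 0⟩⟩⟩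
  · rw [card_isArchedHVG_succ_succ, catalan_succ']
    refine Finset.sum_congr rfl fun p hp => ?_
    rw [mem_antidiagonal] at hp
    rw [ih p.1 (by omega), ih p.2 (by omega)]

theorem card_isHVG (n : ℕ) : Nat.card {E // IsHVG n E} = catalan n := by
  induction n using Nat.strong_induction_on with
  | _ n ih =>
  rcases n with _ | n
  · have hE : ∀ E, IsHVG 0 E → E = ∅ := fun E hE =>
      eq_empty_of_forall_notMem fun ⟨a, b⟩ h => by have := hE.lt_and_le_of_mem h; omega
    rw [catalan_zero, Nat.card_eq_one_iff_unique]
    exact ⟨⟨fun E E' => Subtype.ext ((hE _ E.2).trans (hE _ E'.2).symm)⟩,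
      ⟨⟨_, isHVG_hvgEdges_natCast 0⟩⟩⟩
  · rw [card_isHVG_succ, catalan_succ']
    refine Finset.sum_congr rfl fun p hp => ?_
    rw [mem_antidiagonal] at hp
    rw [card_isArchedHVG, ih p.2 (by omega)]

end HVGSets

def edgesOf {N : ℕ} (G : SimpleGraph (Fin N)) : Set (ℕ × ℕ) :=
  {e | ∃ a b : Fin N, a < b ∧ G.Adj a b ∧ ((a : ℕ), (b : ℕ)) = e}

lemma mem_edgesOf {N : ℕ} {G : SimpleGraph (Fin N)} {a b : Fin N} (hab : a < b) :
    ((a : ℕ), (b : ℕ)) ∈ edgesOf G ↔ G.Adj a b := by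
  refine ⟨fun ⟨a', b', _, h, he⟩ => ?_, fun h => ⟨a, b, hab, h, rfl⟩⟩
  simp only [Prod.mk.injEq, Fin.val_inj] at he
  rwa [← he.1, ← he.2]

lemma edgesOf_injective {N : ℕ} : Injective (edgesOf (N := N)) := by
  intro G G' h
  have key : ∀ a b : Fin N, a < b → (G.Adj a b ↔ G'.Adj a b) := fun a b hab => by
    rw [← mem_edgesOf hab, ← mem_edgesOf hab, h]
  ext a b
  rcases lt_trichotomy a b with hab | rfl | hab
  · exact key a b hab
  · simp
  · rw [G.adj_comm, G'.adj_comm]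
    exact key b a hab

lemma edgesOf_HVG (D : ℕ → ℝ) (n : ℕ) :
    edgesOf (HVG fun i : Fin (n + 1) => D i) = hvgEdges D n := by
  ext ⟨x, y⟩
  constructor
  · rintro ⟨a, b, hab, ⟨-, hk⟩, he⟩
    simp only [Prod.mk.injEq] at he
    obtain ⟨rfl, rfl⟩ := he
    rw [min_eq_left hab.le, max_eq_right hab.le] at hk
    exact ⟨Fin.is_le b, hab, fun k hak hkb => hk ⟨k, by omega⟩ hak hkb⟩
  · rintro ⟨hy, hxy, hk⟩
    have hxy' : (⟨x, by omega⟩ : Fin (n + 1)) < ⟨y, by omega⟩ := hxy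
    refine ⟨_, _, hxy', ⟨hxy'.ne, fun k h₁ h₂ => ?_⟩, rfl⟩
    rw [min_eq_left hxy'.le] at h₁
    rw [max_eq_right hxy'.le] at h₂
    exact hk k h₁ h₂

lemma image_edgesOf_HVGsDistinct (n : ℕ) : edgesOf '' HVGsDistinct (n + 1) = {E | IsHVG n E} := by
  ext E
  constructor
  · rintro ⟨_, ⟨D, hD, rfl⟩, rfl⟩
    have hD' : D = fun i : Fin (n + 1) => D (Fin.ofNat (n + 1) i) :=
      funext fun i => congrArg D (Fin.ext (by simp))
    refine ⟨_, fun x hx y hy h => ?_, (edgesOf_HVG (fun k => D (Fin.ofNat (n + 1) k)) n).symm.trans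
      (congrArg (edgesOf ∘ HVG) hD'.symm)⟩
    have := congrArg Fin.val (hD h)
    simp only [Fin.val_ofNat] at this
    rwa [Nat.mod_eq_of_lt (Nat.lt_succ_of_le hx), Nat.mod_eq_of_lt (Nat.lt_succ_of_le hy)] at this
  · rintro ⟨D, hD, rfl⟩
    exact ⟨_, ⟨_, fun a b h => Fin.ext (hD (Fin.is_le a) (Fin.is_le b) h), rfl⟩, edgesOf_HVG D n⟩

/-- Theorem 1.2 (i): the number of HVGs on `N` vertices coming
from data sequences with pairwise distinct entries is the `(N-1)`-st Catalan
number `C_{N-1} = (1/N) ⬝ binom(2N-2, N-1)`. -/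
theorem hvg_count_catalan (N : ℕ) (hN : 1 ≤ N) :
    (HVGsDistinct N).ncard = catalan (N - 1) ∧
    (HVGsDistinct N).ncard * N = Nat.choose (2 * N - 2) (N - 1) := by
  obtain ⟨n, rfl⟩ := Nat.exists_eq_add_of_le' hN
  have hcard : (HVGsDistinct (n + 1)).ncard = catalan n := by
    rw [← ncard_image_of_injective _ edgesOf_injective, image_edgesOf_HVGsDistinct,
      ← Nat.card_coe_set_eq, ← card_isHVG]
    rfl
  simp only [Nat.add_sub_cancel, hcard, true_and]
  rw [mul_comm, succ_mul_catalan_eq_centralBinom, Nat.centralBinom_eq_two_mul_choose]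
  congr 1
end

section
/- For every natural number N, the Catalan number C_N satisfies the identity C_N = 1 + Σ_{k=3}^{N+1} (3/(2k-3))·binom(2k-3, k). -/
/- The summand for `k = n + 2` is `C_{n+1} - C_n`, so the sum telescopes. The difference identity
`(2n+1) (C_{n+1} - C_n) = 3 binom(2n+1, n+2)` follows from `(n+2) C_{n+1} = 2(2n+1) C_n` together
with `binom(2n+1, n+1) = (2n+1) C_n` and `(n+2) binom(2n+1, n+2) = n binom(2n+1, n+1)`. -/

section

open Nat

theorem choose_two_mul_add_one_succ_eq_mul_catalan (n : ℕ) :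
    (2 * n + 1).choose (n + 1) = (2 * n + 1) * catalan n := by
  apply Nat.eq_of_mul_eq_mul_right (show 0 < n + 1 by omega)
  rw [← add_one_mul_choose_eq, ← centralBinom_eq_two_mul_choose,
    ← succ_mul_catalan_eq_centralBinom]
  ring

theorem add_two_mul_catalan_succ (n : ℕ) :
    (n + 2) * catalan (n + 1) = 2 * (2 * n + 1) * catalan n := by
  apply Nat.eq_of_mul_eq_mul_left (show 0 < n + 1 by omega)
  calc (n + 1) * ((n + 2) * catalan (n + 1))
      = (n + 1) * centralBinom (n + 1) := by rw [← succ_mul_catalan_eq_centralBinom]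
    _ = 2 * (2 * n + 1) * ((n + 1) * catalan n) := by
      rw [succ_mul_centralBinom_succ, succ_mul_catalan_eq_centralBinom]
    _ = (n + 1) * (2 * (2 * n + 1) * catalan n) := by ring

theorem choose_two_mul_add_one_add_two_mul (n : ℕ) :
    (2 * n + 1).choose (n + 2) * (n + 2) = n * ((2 * n + 1) * catalan n) := by
  rw [choose_succ_right_eq, choose_two_mul_add_one_succ_eq_mul_catalan,
    show 2 * n + 1 - (n + 1) = n by omega]
  ring

theorem two_mul_add_one_mul_catalan_succ (n : ℕ) :
    (2 * n + 1) * catalan (n + 1) = (2 * n + 1) * catalan n + 3 * (2 * n + 1).choose (n + 2) := by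
  apply Nat.eq_of_mul_eq_mul_right (show 0 < n + 2 by omega)
  linear_combination (2 * n + 1) * add_two_mul_catalan_succ n - 3 * choose_two_mul_add_one_add_two_mul n

end

theorem cast_catalan_succ_sub_catalan {K : Type*} [Field K] [CharZero K] (n : ℕ) :
    (catalan (n + 1) : K) - catalan n = 3 / (2 * n + 1) * (2 * n + 1).choose (n + 2) := by
  have h : (2 * n + 1 : K) ≠ 0 := by exact_mod_cast (2 * n).succ_ne_zero
  have key := congrArg (Nat.cast : ℕ → K) (two_mul_add_one_mul_catalan_succ n)
  push_cast at key
  rw [div_mul_eq_mul_div, eq_div_iff h]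
  linear_combination key

/-- Proposition 3.10: the Catalan number identity
`C_N = 1 + Σ_{k=3}^{N+1} (3/(2k-3)) ⬝ binom(2k-3, k)`. -/
theorem catalan_identity (N : ℕ) :
    (catalan N : ℚ) =
      1 + ∑ k ∈ Finset.Icc 3 (N + 1),
        (3 / ((2 * k - 3 : ℕ) : ℚ)) * ((Nat.choose (2 * k - 3) k : ℕ) : ℚ) := by
  induction N with
  | zero => simp
  | succ n ih =>
    obtain rfl | hn := n.eq_zero_or_pos
    · simp
    rw [Finset.sum_Icc_succ_top (by omega), ← add_assoc, ← ih, ← sub_eq_iff_eq_add',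
      cast_catalan_succ_sub_catalan, show 2 * (n + 1 + 1) - 3 = 2 * n + 1 by omega]
    push_cast
    ring
end
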